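/- arXiv:1304.1347 — 2 statements merged into one kernel-verified Lean document; each statement's English description precedes it below -/
import Mathlib

section
/- Distribution-independent FEI⁺ bound: every F : {-1,1}^k → {-1,1} satisfies H^μ[F^{≥1}] ≤ 2^{O(k)}·(Inf^μ[F] − Var_μ[F]) for every product distribution μ with all biases in (−1,1); concretely, H^μ[F^{≥1}] ≤ (2^{3k+1}/ln 2)·(Inf^μ[F] − Var_μ[F]). -/
open Finset Real

noncomputable section

/-- ±1 encoding of a Boolean. -/
def b2r (b : Bool) : ℝ := if b then 1 else -1

variable {ι : Type*} [Fintype ι] [DecidableEq ι]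

/-- Uniform-distribution Fourier coefficient `f̂(S) = E[f(x) ∏_{i∈S} x_i]`. -/
def coeff (f : (ι → Bool) → ℝ) (S : Finset ι) : ℝ :=
  (∑ x : ι → Bool, f x * ∏ i ∈ S, b2r (x i)) / (Fintype.card (ι → Bool) : ℝ)

/-- Total influence `Inf[f] = ∑_S |S| f̂(S)²`. -/
def totalInf (f : (ι → Bool) → ℝ) : ℝ :=
  ∑ S : Finset ι, (S.card : ℝ) * (coeff f S) ^ 2

/-- Spectral entropy `H[f] = ∑_S f̂(S)² log₂(1/f̂(S)²)`. -/
def specEnt (f : (ι → Bool) → ℝ) : ℝ :=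
  ∑ S : Finset ι, (coeff f S) ^ 2 * Real.logb 2 (1 / (coeff f S) ^ 2)

/-- Variance `Var[f] = ∑_{S ≠ ∅} f̂(S)²`. -/
def fvariance (f : (ι → Bool) → ℝ) : ℝ :=
  ∑ S ∈ (univ : Finset (Finset ι)).erase ∅, (coeff f S) ^ 2

/-- Weight of the point `x` under the product distribution with biases `μ` (`E[x i] = μ i`). -/
def bweight (μ : ι → ℝ) (x : ι → Bool) : ℝ :=
  ∏ i, (if x i then (1 + μ i) / 2 else (1 - μ i) / 2)

/-- Expectation under the μ-biased product distribution. -/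
def bexp (μ : ι → ℝ) (f : (ι → Bool) → ℝ) : ℝ :=
  ∑ x : ι → Bool, bweight μ x * f x

/-- μ-biased Fourier character `φ^μ_S(x) = ∏_{i∈S} (x_i − μ_i)/σ_i`. -/
def bchi (μ : ι → ℝ) (S : Finset ι) (x : ι → Bool) : ℝ :=
  ∏ i ∈ S, (b2r (x i) - μ i) / Real.sqrt (1 - μ i ^ 2)

/-- μ-biased Fourier coefficient `f̃(S) = E_μ[f φ^μ_S]`. -/
def bcoeff (μ : ι → ℝ) (f : (ι → Bool) → ℝ) (S : Finset ι) : ℝ :=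
  bexp μ fun x => f x * bchi μ S x

/-- μ-biased total influence `Inf^μ[f] = ∑_S |S| f̃(S)²`. -/
def bInf (μ : ι → ℝ) (f : (ι → Bool) → ℝ) : ℝ :=
  ∑ S : Finset ι, (S.card : ℝ) * (bcoeff μ f S) ^ 2

/-- μ-biased variance via Fourier coefficients `Var_μ[f] = ∑_{S ≠ ∅} f̃(S)²`. -/
def bVar (μ : ι → ℝ) (f : (ι → Bool) → ℝ) : ℝ :=
  ∑ S ∈ (univ : Finset (Finset ι)).erase ∅, (bcoeff μ f S) ^ 2

/-- Degree-≥1 μ-biased spectral entropy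
`H^μ[f^{≥1}] = ∑_{S≠∅} f̃(S)² log₂(∏_{i∈S} σ_i² / f̃(S)²)`. -/
def bEnt1 (μ : ι → ℝ) (f : (ι → Bool) → ℝ) : ℝ :=
  ∑ S ∈ (univ : Finset (Finset ι)).erase ∅,
    (bcoeff μ f S) ^ 2 * Real.logb 2 ((∏ i ∈ S, (1 - μ i ^ 2)) / (bcoeff μ f S) ^ 2)

/-- Full μ-biased spectral entropy (sum over all `S`). -/
def bEnt (μ : ι → ℝ) (f : (ι → Bool) → ℝ) : ℝ :=
  ∑ S : Finset ι,
    (bcoeff μ f S) ^ 2 * Real.logb 2 ((∏ i ∈ S, (1 - μ i ^ 2)) / (bcoeff μ f S) ^ 2)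

/-- Probabilistic variance under the μ-biased product distribution. -/
def bVarFn (μ : ι → ℝ) (f : (ι → Bool) → ℝ) : ℝ :=
  bexp μ (fun x => (f x - bexp μ f) ^ 2)

/-- All biases lie strictly between −1 and 1. -/
def validBias (μ : ι → ℝ) : Prop := ∀ i, -1 < μ i ∧ μ i < 1

/-- Discrete derivative `D_{x_j} f`. -/
def Dx (j : ι) (f : (ι → Bool) → ℝ) (x : ι → Bool) : ℝ :=
  (f (Function.update x j true) - f (Function.update x j false)) / 2

/-- μ-biased discrete derivative `D_{φ^μ_j} f = σ_j D_{x_j} f`. -/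
def Dphi (μ : ι → ℝ) (j : ι) (f : (ι → Bool) → ℝ) (x : ι → Bool) : ℝ :=
  Real.sqrt (1 - μ j ^ 2) * Dx j f x

namespace FEI

variable {k : ℕ}

/-- per-coordinate weight -/
def w (μ : Fin k → ℝ) (i : Fin k) (b : Bool) : ℝ := if b then (1 + μ i) / 2 else (1 - μ i) / 2

/-- per-coordinate character -/
def ph (μ : Fin k → ℝ) (i : Fin k) (b : Bool) : ℝ := (b2r b - μ i) / Real.sqrt (1 - μ i ^ 2)

variable {μ : Fin k → ℝ}

lemma bweight_eq (x : Fin k → Bool) : bweight μ x = ∏ i, w μ i (x i) := rfl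

lemma bchi_eq (S : Finset (Fin k)) (x : Fin k → Bool) :
    bchi μ S x = ∏ i ∈ S, ph μ i (x i) := rfl

section coord
variable (hμ : validBias μ) (i : Fin k)
include hμ

lemma sq_pos : 0 < 1 - μ i ^ 2 := by
  have h1 := (hμ i).1; have h2 := (hμ i).2; nlinarith

lemma sg_pos : 0 < Real.sqrt (1 - μ i ^ 2) := Real.sqrt_pos.2 (sq_pos hμ i)

lemma sg_sq : Real.sqrt (1 - μ i ^ 2) ^ 2 = 1 - μ i ^ 2 :=
  Real.sq_sqrt (le_of_lt (sq_pos hμ i))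

lemma w_pos (b : Bool) : 0 < w μ i b := by
  have h1 := (hμ i).1; have h2 := (hμ i).2
  cases b <;> simp [w] <;> linarith

omit hμ in
lemma w_add : w μ i true + w μ i false = 1 := by simp [w]; ring

lemma w_mul_ph (b : Bool) : w μ i b * ph μ i b = b2r b * Real.sqrt (1 - μ i ^ 2) / 2 := by
  have hs := sg_pos hμ i
  have hsq := sg_sq hμ i
  cases b <;>
  · simp only [w, ph, b2r, if_true, if_false, Bool.false_eq_true, ↓reduceIte]
    field_simp
    nlinarith [hsq]

lemma wph_add : w μ i true * ph μ i true + w μ i false * ph μ i false = 0 := by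
  rw [w_mul_ph hμ i, w_mul_ph hμ i]; simp [b2r]; ring

lemma one_add_ph_mul_ph (b b' : Bool) :
    1 + ph μ i b * ph μ i b' = if b = b' then (w μ i b)⁻¹ else 0 := by
  have hsq : Real.sqrt (1 - μ i ^ 2) * Real.sqrt (1 - μ i ^ 2) = 1 - μ i ^ 2 :=
    Real.mul_self_sqrt (le_of_lt (sq_pos hμ i))
  have h1 := (hμ i).1; have h2 := (hμ i).2
  have hq : (1 : ℝ) - μ i ^ 2 ≠ 0 := ne_of_gt (sq_pos hμ i)
  have hp : (1 : ℝ) + μ i ≠ 0 := by linarith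
  have hm : (1 : ℝ) - μ i ≠ 0 := by linarith
  cases b <;> cases b' <;>
  · simp only [ph, b2r, w, if_true, if_false, Bool.false_eq_true, Bool.true_eq_false, reduceIte, div_mul_div_comm, hsq]
    field_simp
    ring

end coord

lemma sum_prod_bool (g : Fin k → Bool → ℝ) :
    ∑ x : Fin k → Bool, ∏ i, g i (x i) = ∏ i, (g i true + g i false) := by
  rw [← Fintype.prod_sum g]
  exact Finset.prod_congr rfl fun i _ => by simp [Fintype.univ_bool]

lemma bweight_sum : ∑ x : Fin k → Bool, bweight μ x = 1 := by
  calc ∑ x : Fin k → Bool, bweight μ x = ∑ x : Fin k → Bool, ∏ i, w μ i (x i) :=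
        Finset.sum_congr rfl fun x _ => bweight_eq x
    _ = ∏ i, (w μ i true + w μ i false) := sum_prod_bool _
    _ = 1 := Finset.prod_eq_one fun i _ => w_add i

lemma bweight_pos (hμ : validBias μ) (x : Fin k → Bool) : 0 < bweight μ x := by
  rw [bweight_eq]; exact Finset.prod_pos fun i _ => w_pos hμ i (x i)

end FEI

section part2
namespace FEI
variable {k : ℕ} {μ : Fin k → ℝ}

lemma delta_sum (hμ : validBias μ) (x y : Fin k → Bool) :
    ∑ S : Finset (Fin k), bchi μ S x * bchi μ S y
      = if x = y then (bweight μ x)⁻¹ else 0 := by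
  have step1 : ∀ S : Finset (Fin k), bchi μ S x * bchi μ S y
      = ∏ i ∈ S, (ph μ i (x i) * ph μ i (y i)) := by
    intro S; rw [bchi_eq, bchi_eq, ← Finset.prod_mul_distrib]
  calc ∑ S : Finset (Fin k), bchi μ S x * bchi μ S y
      = ∑ S : Finset (Fin k), (∏ i ∈ S, (ph μ i (x i) * ph μ i (y i))) * ∏ i ∈ Sᶜ, (1:ℝ) := by
        refine Finset.sum_congr rfl fun S _ => ?_
        rw [step1 S, Finset.prod_const_one, mul_one]
    _ = ∏ i, (ph μ i (x i) * ph μ i (y i) + 1) := (Fintype.prod_add _ _).symm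
    _ = ∏ i, (if x i = y i then (w μ i (x i))⁻¹ else (0:ℝ)) := by
        refine Finset.prod_congr rfl fun i _ => ?_
        rw [add_comm, one_add_ph_mul_ph hμ i]
    _ = if x = y then (bweight μ x)⁻¹ else 0 := by
        by_cases h : x = y
        · rw [if_pos h]
          rw [Finset.prod_congr rfl fun i _ => if_pos (congrFun h i)]
          rw [bweight_eq, ← Finset.prod_inv_distrib]
        · rw [if_neg h]
          obtain ⟨i, hi⟩ : ∃ i, x i ≠ y i := by
            by_contra hc; push_neg at hc; exact h (funext hc)
          exact Finset.prod_eq_zero (Finset.mem_univ i) (if_neg hi)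

lemma expansion (hμ : validBias μ) (g : (Fin k → Bool) → ℝ) (x : Fin k → Bool) :
    ∑ S : Finset (Fin k), bcoeff μ g S * bchi μ S x = g x := by
  have : ∀ S : Finset (Fin k), bcoeff μ g S * bchi μ S x
      = ∑ y : Fin k → Bool, bweight μ y * g y * (bchi μ S y * bchi μ S x) := by
    intro S
    simp only [bcoeff, bexp, Finset.sum_mul]
    exact Finset.sum_congr rfl fun y _ => by ring
  rw [Finset.sum_congr rfl fun S _ => this S]
  rw [Finset.sum_comm]
  have : ∀ y : Fin k → Bool,
      ∑ S : Finset (Fin k), bweight μ y * g y * (bchi μ S y * bchi μ S x)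
        = bweight μ y * g y * (if y = x then (bweight μ y)⁻¹ else 0) := by
    intro y; rw [← Finset.mul_sum, delta_sum hμ y x]
  rw [Finset.sum_congr rfl fun y _ => this y]
  rw [Finset.sum_eq_single x]
  · rw [if_pos rfl]
    field_simp [ne_of_gt (bweight_pos hμ x)]
  · intro y _ hyx; rw [if_neg hyx, mul_zero]
  · intro h; exact absurd (Finset.mem_univ x) h

lemma parseval (hμ : validBias μ) (g : (Fin k → Bool) → ℝ) :
    bexp μ (fun x => g x ^ 2) = ∑ S : Finset (Fin k), bcoeff μ g S ^ 2 := by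
  calc bexp μ (fun x => g x ^ 2)
      = ∑ x : Fin k → Bool, bweight μ x * g x * g x := by
        unfold bexp; exact Finset.sum_congr rfl fun x _ => by ring
    _ = ∑ x : Fin k → Bool, bweight μ x * g x *
          (∑ S : Finset (Fin k), bcoeff μ g S * bchi μ S x) := by
        refine Finset.sum_congr rfl fun x _ => ?_
        rw [expansion hμ g x]
    _ = ∑ x : Fin k → Bool, ∑ S : Finset (Fin k),
          bcoeff μ g S * (bweight μ x * (g x * bchi μ S x)) := by
        refine Finset.sum_congr rfl fun x _ => ?_
        rw [Finset.mul_sum]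
        exact Finset.sum_congr rfl fun S _ => by ring
    _ = ∑ S : Finset (Fin k), bcoeff μ g S ^ 2 := by
        rw [Finset.sum_comm]
        refine Finset.sum_congr rfl fun S _ => ?_
        rw [← Finset.mul_sum]
        rw [show (∑ x : Fin k → Bool, bweight μ x * (g x * bchi μ S x)) = bcoeff μ g S from rfl]
        ring

lemma bcoeff_empty (g : (Fin k → Bool) → ℝ) : bcoeff μ g ∅ = bexp μ g := by
  unfold bcoeff bexp
  refine Finset.sum_congr rfl fun x _ => ?_
  show bweight μ x * (g x * bchi μ ∅ x) = bweight μ x * g x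
  rw [bchi_eq, Finset.prod_empty, mul_one]

end FEI
end part2

section part3
namespace FEI
variable {k : ℕ}

/-- `χ_S` (uniform character, ±1-valued) -/
def chi (S : Finset (Fin k)) (z : Fin k → Bool) : ℝ := ∏ i ∈ S, b2r (z i)

lemma chi_pm (S : Finset (Fin k)) (z : Fin k → Bool) : chi S z = 1 ∨ chi S z = -1 := by
  apply mul_self_eq_one_iff.mp
  rw [chi, ← Finset.prod_mul_distrib]
  exact Finset.prod_eq_one fun i _ => by cases z i <;> simp [b2r]

/-- the averaged sub-cube transform -/
def mS (μ : Fin k → ℝ) (F : (Fin k → Bool) → ℝ) (S : Finset (Fin k)) (x : Fin k → Bool) : ℝ :=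
  (∑ z : Fin k → Bool, if (∀ i, i ∉ S → z i = x i) then F z * chi S z else 0) / 2 ^ S.card

lemma card_agree (S : Finset (Fin k)) (x : Fin k → Bool) :
    (Finset.univ.filter (fun z : Fin k → Bool => ∀ i, i ∉ S → z i = x i)).card
      = 2 ^ S.card := by
  have : (Finset.univ.filter (fun z : Fin k → Bool => ∀ i, i ∉ S → z i = x i)).card
      = (Finset.univ : Finset ({i // i ∈ S} → Bool)).card := by
    apply Finset.card_nbij' (i := fun z => (fun i => z i.1 : {i // i ∈ S} → Bool))
      (j := fun g => fun i => if h : i ∈ S then g ⟨i, h⟩ else x i)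
    · intro a _; exact Finset.mem_univ _
    · intro g _
      simp only [Finset.mem_coe, Finset.mem_filter, Finset.mem_univ, true_and]
      intro i hi; rw [dif_neg hi]
    · intro z hz
      simp only [Finset.mem_coe, Finset.mem_filter, Finset.mem_univ, true_and] at hz
      funext i
      by_cases h : i ∈ S
      · simp only [dif_pos h]
      · simp only [dif_neg h]; exact (hz i h).symm
    · intro g _
      funext i
      simp only [dif_pos i.2]
  rw [this, Finset.card_univ, Fintype.card_fun, Fintype.card_bool, Fintype.card_coe]

lemma pm_sum_parity (E : Finset (Fin k → Bool)) (f : (Fin k → Bool) → ℝ)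
    (hf : ∀ z ∈ E, f z = 1 ∨ f z = -1) :
    ∑ z ∈ E, f z = (E.card : ℝ) - 2 * ((E.filter (fun z => f z = -1)).card : ℝ) := by
  classical
  rw [← Finset.sum_filter_add_sum_filter_not E (fun z => f z = -1) f]
  have h1 : ∑ z ∈ E.filter (fun z => f z = -1), f z
      = -((E.filter (fun z => f z = -1)).card : ℝ) := by
    rw [Finset.sum_congr rfl (fun z hz => (Finset.mem_filter.mp hz).2)]
    simp
  have h2 : ∑ z ∈ E.filter (fun z => ¬(f z = -1)), f z
      = ((E.filter (fun z => ¬(f z = -1))).card : ℝ) := by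
    have : ∀ z ∈ E.filter (fun z => ¬(f z = -1)), f z = 1 := by
      intro z hz
      have hz' := Finset.mem_filter.mp hz
      rcases hf z hz'.1 with h | h
      · exact h
      · exact absurd h hz'.2
    rw [Finset.sum_congr rfl this]
    simp
  rw [h1, h2]
  have h3 : (E.filter (fun z => ¬(f z = -1))).card
      = E.card - (E.filter (fun z => f z = -1)).card := by
    have := Finset.card_filter_add_card_filter_not (s := E) (p := fun z => f z = -1)
    omega
  rw [h3]
  have h4 : (E.filter (fun z => f z = -1)).card ≤ E.card := Finset.card_filter_le _ _
  push_cast [h4]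
  ring

lemma mS_pointwise {μ : Fin k → ℝ} {F : (Fin k → Bool) → ℝ}
    (hF : ∀ x, F x = 1 ∨ F x = -1) (S : Finset (Fin k)) (hS : S.Nonempty)
    (x : Fin k → Bool) :
    (2 / 2 ^ S.card) * |mS μ F S x| ≤ (mS μ F S x) ^ 2 := by
  classical
  set E := Finset.univ.filter (fun z : Fin k → Bool => ∀ i, i ∉ S → z i = x i) with hE
  have hnum : (∑ z : Fin k → Bool, if (∀ i, i ∉ S → z i = x i) then F z * chi S z else 0)
      = ∑ z ∈ E, F z * chi S z := (Finset.sum_filter _ _).symm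
  have hpm : ∀ z ∈ E, F z * chi S z = 1 ∨ F z * chi S z = -1 := by
    intro z _
    rcases hF z with h1 | h1 <;> rcases chi_pm S z with h2 | h2 <;>
      simp [h1, h2]
  set b := (E.filter (fun z => F z * chi S z = -1)).card with hb
  have hsum : ∑ z ∈ E, F z * chi S z = (2 ^ S.card : ℝ) - 2 * b := by
    rw [pm_sum_parity E _ hpm, ← hb, hE, card_agree S x]
    push_cast
    ring
  -- N = 2 * M with M an integer
  obtain ⟨s', hs'⟩ : ∃ s', S.card = s' + 1 :=
    ⟨S.card - 1, (Nat.succ_pred_eq_of_pos (Finset.card_pos.mpr hS)).symm⟩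
  set M : ℤ := 2 ^ s' - b with hM
  have hN : ∑ z ∈ E, F z * chi S z = 2 * (M : ℝ) := by
    rw [hsum, hs', hM]
    push_cast
    ring
  have hm : mS μ F S x = 2 * (M : ℝ) / 2 ^ S.card := by
    rw [mS, hnum, hN]
  have hpow : (0:ℝ) < 2 ^ S.card := by positivity
  rw [hm, abs_div, abs_of_pos hpow, div_pow]
  rw [div_mul_eq_mul_div, div_le_div_iff₀ (by positivity) (by positivity)]
  have key : 2 * |2 * (M:ℝ)| ≤ (2 * (M:ℝ)) ^ 2 := by
    rcases eq_or_ne M 0 with h | h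
    · simp [h]
    · have h1 : (1:ℤ) ≤ |M| := Int.one_le_abs h
      have h1' : (1:ℝ) ≤ |(M:ℝ)| := by
        rw [← Int.cast_abs]; exact_mod_cast h1
      have habs : |2 * (M:ℝ)| = 2 * |(M:ℝ)| := by
        rw [abs_mul, abs_two]
      rw [habs]
      nlinarith [sq_abs ((M:ℝ)), sq_nonneg ((M:ℝ))]
  have heq : 2 * (|2 * (M:ℝ)| / 2 ^ S.card) * (2 ^ S.card) ^ 2
      = (2 * |2 * (M:ℝ)|) * 2 ^ S.card := by
    field_simp
  rw [heq]
  exact mul_le_mul_of_nonneg_right key (le_of_lt hpow)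

end FEI
end part3

section part4
namespace FEI
variable {k : ℕ}

def psi (μ : Fin k → ℝ) (S U : Finset (Fin k)) (z : Fin k → Bool) (i : Fin k) (b : Bool) : ℝ :=
  w μ i b * (if i ∈ U then ph μ i b else 1) * (if i ∈ S then 1 else if z i = b then 1 else 0)

def kap (μ : Fin k → ℝ) (S U : Finset (Fin k)) (z : Fin k → Bool) (i : Fin k) : ℝ :=
  if i ∈ S then (if i ∈ U then 0 else 1)
  else w μ i (z i) * (if i ∈ U then ph μ i (z i) else 1)

variable {μ : Fin k → ℝ} {F : (Fin k → Bool) → ℝ} {S U : Finset (Fin k)} {z : Fin k → Bool}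

lemma psi_sum (hμ : validBias μ) (i : Fin k) :
    psi μ S U z i true + psi μ S U z i false = kap μ S U z i := by
  by_cases hiS : i ∈ S
  · by_cases hiU : i ∈ U
    · simp only [psi, kap, if_pos hiS, if_pos hiU, mul_one]
      exact wph_add hμ i
    · simp only [psi, kap, if_pos hiS, if_neg hiU, mul_one]
      exact w_add i
  · by_cases hiU : i ∈ U <;>
      cases hz : z i <;>
        simp [psi, kap, hiS, hiU, hz]

lemma inner_z (hμ : validBias μ) :
    (∑ x : Fin k → Bool, if (∀ i, i ∉ S → z i = x i) then bweight μ x * bchi μ U x else 0)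
      = ∏ i, kap μ S U z i := by
  have hpt : ∀ x : Fin k → Bool,
      (if (∀ i, i ∉ S → z i = x i) then bweight μ x * bchi μ U x else 0)
        = ∏ i, psi μ S U z i (x i) := by
    intro x
    have hC : (if (∀ i, i ∉ S → z i = x i) then (1:ℝ) else 0)
        = ∏ i, (if i ∈ S then (1:ℝ) else if z i = x i then 1 else 0) := by
      by_cases h : ∀ i, i ∉ S → z i = x i
      · rw [if_pos h]
        symm
        apply Finset.prod_eq_one
        intro i _
        by_cases hi : i ∈ S
        · rw [if_pos hi]
        · rw [if_neg hi, if_pos (h i hi)]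
      · rw [if_neg h]
        push_neg at h
        obtain ⟨i, hiS, hne⟩ := h
        symm
        apply Finset.prod_eq_zero (Finset.mem_univ i)
        rw [if_neg hiS, if_neg hne]
    have hW : bweight μ x * bchi μ U x
        = ∏ i, (w μ i (x i) * (if i ∈ U then ph μ i (x i) else 1)) := by
      rw [bweight_eq, bchi_eq, ← Fintype.prod_ite_mem U (fun i => ph μ i (x i)),
        ← Finset.prod_mul_distrib]
    calc (if (∀ i, i ∉ S → z i = x i) then bweight μ x * bchi μ U x else 0)
        = (bweight μ x * bchi μ U x) * (if (∀ i, i ∉ S → z i = x i) then (1:ℝ) else 0) := by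
          rw [mul_ite, mul_one, mul_zero]
      _ = (∏ i, (w μ i (x i) * (if i ∈ U then ph μ i (x i) else 1)))
            * ∏ i, (if i ∈ S then (1:ℝ) else if z i = x i then 1 else 0) := by rw [hW, hC]
      _ = ∏ i, psi μ S U z i (x i) := by
          rw [← Finset.prod_mul_distrib]
          exact Finset.prod_congr rfl fun i _ => rfl
  rw [Finset.sum_congr rfl fun x _ => hpt x, sum_prod_bool]
  exact Finset.prod_congr rfl fun i _ => psi_sum hμ i

lemma bcoeff_mS_eq (hμ : validBias μ) :
    bcoeff μ (mS μ F S) U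
      = (1 / 2 ^ S.card) * ∑ z : Fin k → Bool,
          F z * chi S z * ∏ i, kap μ S U z i := by
  have step1 : bcoeff μ (mS μ F S) U
      = ∑ x : Fin k → Bool, (1 / 2 ^ S.card) * ∑ z : Fin k → Bool,
          (if (∀ i, i ∉ S → z i = x i) then F z * chi S z * (bweight μ x * bchi μ U x) else 0) := by
    unfold bcoeff bexp mS
    refine Finset.sum_congr rfl fun x _ => ?_
    show bweight μ x * ((∑ z : Fin k → Bool,
          if (∀ i, i ∉ S → z i = x i) then F z * chi S z else 0) / 2 ^ S.card * bchi μ U x)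
        = (1 / 2 ^ S.card) * ∑ z : Fin k → Bool,
          (if (∀ i, i ∉ S → z i = x i) then F z * chi S z * (bweight μ x * bchi μ U x) else 0)
    have hz : (∑ z : Fin k → Bool,
          if (∀ i, i ∉ S → z i = x i) then F z * chi S z * (bweight μ x * bchi μ U x) else 0)
        = (∑ z : Fin k → Bool, if (∀ i, i ∉ S → z i = x i) then F z * chi S z else 0)
            * (bweight μ x * bchi μ U x) := by
      rw [Finset.sum_mul]
      exact Finset.sum_congr rfl fun z _ => by rw [ite_mul, zero_mul]
    rw [hz]
    ring
  rw [step1, ← Finset.mul_sum]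
  congr 1
  rw [Finset.sum_comm]
  refine Finset.sum_congr rfl fun z _ => ?_
  have : ∀ x : Fin k → Bool,
      (if (∀ i, i ∉ S → z i = x i) then F z * chi S z * (bweight μ x * bchi μ U x) else 0)
        = F z * chi S z * (if (∀ i, i ∉ S → z i = x i) then bweight μ x * bchi μ U x else 0) := by
    intro x
    rw [mul_ite, mul_zero]
  rw [Finset.sum_congr rfl fun x _ => this x, ← Finset.mul_sum, inner_z hμ]

lemma bcoeff_mS_zero (hμ : validBias μ) (h : ¬ Disjoint S U) :
    bcoeff μ (mS μ F S) U = 0 := by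
  obtain ⟨i, hiS, hiU⟩ := Finset.not_disjoint_iff.mp h
  rw [bcoeff_mS_eq hμ]
  have : ∀ z : Fin k → Bool, F z * chi S z * ∏ j, kap μ S U z j = 0 := by
    intro z
    have : ∏ j, kap μ S U z j = 0 := by
      apply Finset.prod_eq_zero (Finset.mem_univ i)
      rw [kap, if_pos hiS, if_pos hiU]
    rw [this, mul_zero]
  rw [Finset.sum_congr rfl fun z _ => this z]
  simp

lemma bcoeff_mS_disj (hμ : validBias μ) (h : Disjoint S U) :
    bcoeff μ F (S ∪ U)
      = (∏ i ∈ S, Real.sqrt (1 - μ i ^ 2)) * bcoeff μ (mS μ F S) U := by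
  rw [bcoeff_mS_eq hμ, ← mul_assoc, Finset.mul_sum]
  unfold bcoeff bexp
  refine Finset.sum_congr rfl fun z _ => ?_
  show bweight μ z * (F z * bchi μ (S ∪ U) z)
      = (∏ i ∈ S, Real.sqrt (1 - μ i ^ 2)) * (1 / 2 ^ S.card)
        * (F z * chi S z * ∏ i, kap μ S U z i)
  have h2 : (∏ i ∈ S, Real.sqrt (1 - μ i ^ 2)) * (1 / 2 ^ S.card) * chi S z
      = ∏ i ∈ S, (w μ i (z i) * ph μ i (z i)) := by
    have hhalf : (1:ℝ) / 2 ^ S.card = ∏ _i ∈ S, ((1:ℝ)/2) := by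
      rw [Finset.prod_const, div_pow, one_pow]
    rw [hhalf]
    simp only [chi]
    rw [← Finset.prod_mul_distrib, ← Finset.prod_mul_distrib]
    refine Finset.prod_congr rfl fun i hi => ?_
    rw [w_mul_ph hμ i]
    ring
  have key : bweight μ z * bchi μ (S ∪ U) z
      = (∏ i ∈ S, Real.sqrt (1 - μ i ^ 2)) * (1 / 2 ^ S.card)
        * (chi S z * ∏ i, kap μ S U z i) := by
    calc bweight μ z * bchi μ (S ∪ U) z
        = ∏ i, (w μ i (z i) * (if i ∈ S ∪ U then ph μ i (z i) else 1)) := by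
          rw [bweight_eq, bchi_eq, ← Fintype.prod_ite_mem (S ∪ U) (fun i => ph μ i (z i)),
            ← Finset.prod_mul_distrib]
      _ = (∏ i ∈ S, (w μ i (z i) * ph μ i (z i))) * ∏ i, kap μ S U z i := by
          rw [← Fintype.prod_ite_mem S (fun i => w μ i (z i) * ph μ i (z i)),
            ← Finset.prod_mul_distrib]
          refine Finset.prod_congr rfl fun i _ => ?_
          by_cases hiS : i ∈ S
          · have hiU : i ∉ U := Finset.disjoint_left.mp h hiS
            rw [if_pos hiS, kap, if_pos hiS, if_neg hiU, mul_one,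
              if_pos (Finset.mem_union_left U hiS)]
          · by_cases hiU : i ∈ U
            · rw [if_neg hiS, kap, if_neg hiS, if_pos hiU, one_mul,
                if_pos (Finset.mem_union_right S hiU)]
            · have hnu : i ∉ S ∪ U := by
                rw [Finset.mem_union]; tauto
              rw [if_neg hiS, kap, if_neg hiS, if_neg hiU, one_mul, mul_one, if_neg hnu,
                mul_one]
      _ = (∏ i ∈ S, Real.sqrt (1 - μ i ^ 2)) * (1 / 2 ^ S.card)
            * (chi S z * ∏ i, kap μ S U z i) := by
          rw [← h2]; ring
  calc bweight μ z * (F z * bchi μ (S ∪ U) z)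
      = F z * (bweight μ z * bchi μ (S ∪ U) z) := by ring
    _ = _ := by rw [key]; ring

end FEI
end part4

section part5
namespace FEI
variable {k : ℕ} {μ : Fin k → ℝ}

lemma bexp_sub_const_sq (f : (Fin k → Bool) → ℝ) (c : ℝ) :
    bexp μ (fun x => (f x - c)^2)
      = bexp μ (fun x => f x^2) - 2*c*bexp μ f + c^2 := by
  unfold bexp
  have h1 : ∀ x : Fin k → Bool, bweight μ x * (f x - c)^2
      = bweight μ x * f x^2 - 2*c*(bweight μ x * f x) + c^2 * bweight μ x := fun x => by ring
  rw [Finset.sum_congr rfl fun x _ => h1 x]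
  rw [Finset.sum_add_distrib, Finset.sum_sub_distrib, ← Finset.mul_sum, ← Finset.mul_sum]
  rw [bweight_sum]
  ring

lemma sq_bexp_le (hμ : validBias μ) (f : (Fin k → Bool) → ℝ) :
    (bexp μ f)^2 ≤ bexp μ (fun x => f x^2) := by
  have h0 : 0 ≤ bexp μ (fun x => (f x - bexp μ f)^2) := by
    unfold bexp
    exact Finset.sum_nonneg fun x _ =>
      mul_nonneg (le_of_lt (bweight_pos hμ x)) (sq_nonneg _)
  rw [bexp_sub_const_sq f (bexp μ f)] at h0
  nlinarith [h0]

lemma abs_bexp_le (hμ : validBias μ) (f : (Fin k → Bool) → ℝ) :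
    |bexp μ f| ≤ bexp μ (fun x => |f x|) := by
  unfold bexp
  calc |∑ x : Fin k → Bool, bweight μ x * f x|
      ≤ ∑ x : Fin k → Bool, |bweight μ x * f x| := Finset.abs_sum_le_sum_abs _ _
    _ = ∑ x : Fin k → Bool, bweight μ x * |f x| := by
        refine Finset.sum_congr rfl fun x _ => ?_
        rw [abs_mul, abs_of_pos (bweight_pos hμ x)]

lemma bexp_mono (hμ : validBias μ) {f g : (Fin k → Bool) → ℝ} (h : ∀ x, f x ≤ g x) :
    bexp μ f ≤ bexp μ g :=
  Finset.sum_le_sum fun x _ => mul_le_mul_of_nonneg_left (h x) (le_of_lt (bweight_pos hμ x))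

lemma log_one_div_sq {c : ℝ} (h : c ≠ 0) :
    Real.log (1/c^2) = 2 * Real.log (1/|c|) := by
  rw [one_div, one_div, Real.log_inv, Real.log_inv, ← sq_abs c, Real.log_pow]
  push_cast
  ring

lemma csq_div_abs {c : ℝ} (h : c ≠ 0) : c^2 / |c| = |c| := by
  rw [← sq_abs c, sq]
  field_simp

lemma scalarA {c q : ℝ} (h1 : |c| ≤ q) :
    c^2 * Real.log (1/c^2) ≤ 2*(q - c^2) := by
  rcases eq_or_ne c 0 with h | h
  · have hq : (0:ℝ) ≤ q := by simpa [h] using h1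
    simp [h]
    linarith
  · have habs : 0 < |c| := abs_pos.2 h
    have hb : Real.log (1/|c|) ≤ 1/|c| - 1 := Real.log_le_sub_one_of_pos (by positivity)
    calc c^2 * Real.log (1/c^2) = c^2 * (2 * Real.log (1/|c|)) := by rw [log_one_div_sq h]
      _ ≤ c^2 * (2 * (1/|c| - 1)) :=
          mul_le_mul_of_nonneg_left (by linarith) (sq_nonneg c)
      _ = 2 * (c^2/|c| - c^2) := by ring
      _ = 2 * (|c| - c^2) := by rw [csq_div_abs h]
      _ ≤ 2 * (q - c^2) := by linarith

lemma scalarB {c q δ : ℝ} (hδ0 : 0 < δ) (hδ2 : δ ≤ 2) (h1 : δ * |c| ≤ q) (h2 : c^2 ≤ q) :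
    c^2 * Real.log (1/c^2) ≤ (4/δ) * (q - c^2) + Real.log (4/δ^2) * c^2 := by
  have hlogpos : 0 ≤ Real.log (4/δ^2) := by
    apply Real.log_nonneg
    rw [le_div_iff₀ (by positivity)]
    nlinarith
  rcases eq_or_ne c 0 with h | h
  · have hq : (0:ℝ) ≤ q := by simpa [h] using h1
    simp [h]
    exact mul_nonneg (by positivity) hq
  · have habs : 0 < |c| := abs_pos.2 h
    by_cases hsmall : |c| ≤ δ/2
    · have hb : Real.log (1/|c|) ≤ 1/|c| - 1 := Real.log_le_sub_one_of_pos (by positivity)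
      have hL : c^2 * Real.log (1/c^2) ≤ 2*|c| := by
        calc c^2 * Real.log (1/c^2) = c^2 * (2 * Real.log (1/|c|)) := by rw [log_one_div_sq h]
          _ ≤ c^2 * (2 * (1/|c|)) :=
              mul_le_mul_of_nonneg_left (by linarith) (sq_nonneg c)
          _ = 2 * (c^2/|c|) := by ring
          _ = 2 * |c| := by rw [csq_div_abs h]
      have hcsq : c^2 ≤ (δ/2)*|c| := by
        rw [← sq_abs c, sq]
        exact mul_le_mul_of_nonneg_right hsmall (abs_nonneg c)
      have hV : δ*|c|/2 ≤ q - c^2 := by linarith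
      have hmain : 2*|c| ≤ (4/δ)*(q - c^2) := by
        have e1 : (4/δ) * (δ*|c|/2) = 2*|c| := by field_simp; ring
        have e2 : (4/δ) * (δ*|c|/2) ≤ (4/δ)*(q - c^2) :=
          mul_le_mul_of_nonneg_left hV (by positivity)
        linarith
      have hc2log : 0 ≤ Real.log (4/δ^2) * c^2 := mul_nonneg hlogpos (sq_nonneg c)
      linarith
    · push_neg at hsmall
      have hc2 : δ^2/4 < c^2 := by
        rw [← sq_abs c]
        nlinarith
      have hlogle : Real.log (1/c^2) ≤ Real.log (4/δ^2) := by
        rw [Real.log_le_log_iff (by positivity) (by positivity)]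
        rw [div_le_div_iff₀ (by positivity) (by positivity)]
        nlinarith
      have hfirst : 0 ≤ (4/δ)*(q - c^2) := mul_nonneg (by positivity) (by linarith)
      calc c^2 * Real.log (1/c^2) ≤ c^2 * Real.log (4/δ^2) :=
            mul_le_mul_of_nonneg_left hlogle (sq_nonneg c)
        _ = Real.log (4/δ^2) * c^2 := by ring
        _ ≤ (4/δ)*(q - c^2) + Real.log (4/δ^2) * c^2 := by linarith

end FEI
end part5

section part6
namespace FEI
variable {k : ℕ} {μ : Fin k → ℝ} {F : (Fin k → Bool) → ℝ}

def RS (μ : Fin k → ℝ) (F : (Fin k → Bool) → ℝ) (S : Finset (Fin k)) : ℝ :=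
  ∑ U ∈ (Finset.univ : Finset (Finset (Fin k))).erase ∅,
    if Disjoint S U then (bcoeff μ F (S ∪ U))^2 else 0

lemma RS_nonneg (S : Finset (Fin k)) : 0 ≤ RS μ F S := by
  apply Finset.sum_nonneg
  intro U _
  by_cases h : Disjoint S U
  · rw [if_pos h]; exact sq_nonneg _
  · rw [if_neg h]

lemma bexp_smul (a : ℝ) (f : (Fin k → Bool) → ℝ) :
    bexp μ (fun x => a * f x) = a * bexp μ f := by
  unfold bexp
  rw [Finset.mul_sum]
  exact Finset.sum_congr rfl fun x _ => by ring

set_option maxHeartbeats 1000000 in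
lemma perS (hμ : validBias μ) (hF : ∀ x, F x = 1 ∨ F x = -1)
    (S : Finset (Fin k)) (hS : S.Nonempty) :
    (bcoeff μ F S)^2 * Real.log ((∏ i ∈ S, (1 - μ i ^ 2)) / (bcoeff μ F S)^2)
      ≤ 2^(S.card + 1) * RS μ F S
        + (if 2 ≤ S.card then 2*S.card*Real.log 2 * (bcoeff μ F S)^2 else 0) := by
  classical
  set m := mS μ F S with hm
  set c := bexp μ m with hc
  set q := bexp μ (fun x => m x ^ 2) with hq
  set Pσ := ∏ i ∈ S, Real.sqrt (1 - μ i ^ 2) with hPσdef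
  set PS := ∏ i ∈ S, (1 - μ i ^ 2) with hPSdef
  have hPσ : 0 < Pσ := Finset.prod_pos fun i _ => sg_pos hμ i
  have hPS : PS = Pσ^2 := by
    rw [hPσdef, hPSdef, ← Finset.prod_pow]
    exact Finset.prod_congr rfl fun i _ => (sg_sq hμ i).symm
  have hPSpos : 0 < PS := by rw [hPS]; positivity
  have ha : bcoeff μ F S = Pσ * c := by
    have h0 := bcoeff_mS_disj (F := F) hμ (Finset.disjoint_empty_right S)
    rw [Finset.union_empty, bcoeff_empty] at h0
    exact h0
  set s := S.card with hsdef
  have hs1 : 1 ≤ s := Finset.card_pos.mpr hS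
  set δ : ℝ := 2/2^s with hδdef
  have hδ0 : (0:ℝ) < δ := by positivity
  have hδ2 : δ ≤ 2 := by
    rw [hδdef, div_le_iff₀ (by positivity)]
    have : (1:ℝ) ≤ 2^s := one_le_pow₀ (by norm_num)
    nlinarith
  have h2 : c^2 ≤ q := sq_bexp_le hμ m
  have h1 : δ * |c| ≤ q := by
    have e1 : |c| ≤ bexp μ (fun x => |m x|) := abs_bexp_le hμ m
    have e2 : δ * bexp μ (fun x => |m x|) = bexp μ (fun x => δ * |m x|) :=
      (bexp_smul δ _).symm
    have e3 : bexp μ (fun x => δ * |m x|) ≤ q := by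
      apply bexp_mono hμ
      intro x
      exact mS_pointwise hF S hS x
    calc δ * |c| ≤ δ * bexp μ (fun x => |m x|) :=
          mul_le_mul_of_nonneg_left e1 (le_of_lt hδ0)
      _ = bexp μ (fun x => δ * |m x|) := e2
      _ ≤ q := e3
  have hparse : q = ∑ U : Finset (Fin k), (bcoeff μ m U)^2 := parseval hμ m
  have hRS : RS μ F S = PS * (q - c^2) := by
    have hper : ∀ U : Finset (Fin k),
        (if Disjoint S U then (bcoeff μ F (S ∪ U))^2 else 0) = PS * (bcoeff μ m U)^2 := by
      intro U
      by_cases h : Disjoint S U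
      · rw [if_pos h, bcoeff_mS_disj (F := F) hμ h, mul_pow, ← hPS]
      · rw [if_neg h, bcoeff_mS_zero (F := F) hμ h]
        ring
    have hsplit : (bcoeff μ m ∅)^2 + ∑ U ∈ (Finset.univ : Finset (Finset (Fin k))).erase ∅,
        (bcoeff μ m U)^2 = ∑ U : Finset (Fin k), (bcoeff μ m U)^2 :=
      Finset.add_sum_erase _ (fun U => (bcoeff μ m U)^2) (Finset.mem_univ ∅)
    have hc0 : bcoeff μ m ∅ = c := bcoeff_empty m
    rw [RS, Finset.sum_congr rfl fun U _ => hper U, ← Finset.mul_sum]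
    have : ∑ U ∈ (Finset.univ : Finset (Finset (Fin k))).erase ∅, (bcoeff μ m U)^2
        = q - c^2 := by
      rw [hparse, ← hsplit, hc0]
      ring
    rw [this]
  rcases eq_or_ne c 0 with hc0 | hc0
  · have ha0 : bcoeff μ F S = 0 := by rw [ha, hc0, mul_zero]
    rw [ha0]
    have hrs := RS_nonneg (μ := μ) (F := F) S
    have hzero : (0:ℝ)^2 * Real.log (PS/(0:ℝ)^2) = 0 := by norm_num
    rw [hzero]
    have hite : (0:ℝ) ≤ if 2 ≤ s then 2*s*Real.log 2 * ((0:ℝ))^2 else 0 := by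
      by_cases h : 2 ≤ s
      · rw [if_pos h]
        have : (0:ℝ) ≤ Real.log 2 := Real.log_nonneg (by norm_num)
        rw [zero_pow two_ne_zero, mul_zero]
      · rw [if_neg h]
    have h2pow : (0:ℝ) ≤ 2^(s+1) := by positivity
    exact add_nonneg (mul_nonneg h2pow hrs) hite
  · have hasq : (bcoeff μ F S)^2 = PS * c^2 := by rw [ha, mul_pow, hPS]
    have hdiv : PS / (bcoeff μ F S)^2 = 1/c^2 := by
      rw [hasq]
      field_simp
    have hLHS : (bcoeff μ F S)^2 * Real.log (PS / (bcoeff μ F S)^2)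
        = PS * (c^2 * Real.log (1/c^2)) := by
      rw [hdiv, hasq]
      ring
    rw [hLHS]
    have h4δ : 4/δ = 2^(s+1) := by
      rw [hδdef]
      rw [div_div_eq_mul_div]
      rw [pow_succ]
      field_simp
      ring
    by_cases h2s : 2 ≤ s
    · have hB := scalarB hδ0 hδ2 h1 h2
      have hlog4 : Real.log (4/δ^2) = 2*s*Real.log 2 := by
        have hpows : ((2:ℝ)^s)^2 = 4^s := by
          rw [← pow_mul, show (4:ℝ) = 2^2 from by norm_num, ← pow_mul, mul_comm]
        have hd2 : δ * 2^s = 2 := by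
          rw [hδdef]; field_simp
        have hkey : δ^2 * 4^s = 4 := by
          have : (δ * 2^s)^2 = δ^2 * 4^s := by rw [mul_pow, hpows]
          rw [← this, hd2]; norm_num
        have hδ4 : (4:ℝ)/δ^2 = 4^s := by
          rw [eq_comm, eq_div_iff (ne_of_gt (pow_pos hδ0 2))]
          nlinarith [hkey]
        rw [hδ4, show (4:ℝ) = 2^2 from by norm_num, ← pow_mul, Real.log_pow]
        push_cast
        ring
      rw [if_pos h2s]
      have step : PS * (c^2 * Real.log (1/c^2))
          ≤ PS * ((4/δ)*(q - c^2) + Real.log (4/δ^2)*c^2) :=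
        mul_le_mul_of_nonneg_left hB (le_of_lt hPSpos)
      have e : PS * ((4/δ)*(q - c^2) + Real.log (4/δ^2)*c^2)
          = 2^(s+1) * RS μ F S + 2*s*Real.log 2 * (bcoeff μ F S)^2 := by
        rw [hRS, hlog4, hasq, ← h4δ]
        ring
      rw [e] at step
      exact step
    · -- s = 1
      have hseq : s = 1 := by omega
      have hδ1 : δ = 1 := by rw [hδdef, hseq]; norm_num
      have h1' : |c| ≤ q := by
        rw [hδ1, one_mul] at h1
        exact h1
      have hA := scalarA h1'
      have step : PS * (c^2 * Real.log (1/c^2)) ≤ PS * (2*(q - c^2)) :=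
        mul_le_mul_of_nonneg_left hA (le_of_lt hPSpos)
      have hrs := RS_nonneg (μ := μ) (F := F) S
      rw [if_neg h2s, add_zero]
      have e : PS * (2*(q - c^2)) = 2 * RS μ F S := by rw [hRS]; ring
      rw [e] at step
      have h24 : (2:ℝ) ≤ 2^(s+1) := by
        rw [hseq]
        norm_num
      have hfin : 2 * RS μ F S ≤ 2^(s+1) * RS μ F S :=
        mul_le_mul_of_nonneg_right h24 hrs
      exact le_trans step hfin
end FEI
end part6

section part7
namespace FEI
variable {k : ℕ} {μ : Fin k → ℝ} {F : (Fin k → Bool) → ℝ}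

lemma RS_le (S : Finset (Fin k)) :
    RS μ F S ≤ ∑ T : Finset (Fin k), if S ⊂ T then (bcoeff μ F T)^2 else 0 := by
  classical
  have h1 : RS μ F S = ∑ U ∈ ((Finset.univ : Finset (Finset (Fin k))).erase ∅).filter
      (fun U => Disjoint S U), (bcoeff μ F (S ∪ U))^2 := by
    rw [RS]
    rw [Finset.sum_filter]
  have hinj : ∀ U1 ∈ ((Finset.univ : Finset (Finset (Fin k))).erase ∅).filter
      (fun U => Disjoint S U), ∀ U2 ∈ ((Finset.univ : Finset (Finset (Fin k))).erase ∅).filter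
      (fun U => Disjoint S U), S ∪ U1 = S ∪ U2 → U1 = U2 := by
    intro U1 h1' U2 h2' he
    have hd1 : Disjoint S U1 := (Finset.mem_filter.mp h1').2
    have hd2 : Disjoint S U2 := (Finset.mem_filter.mp h2').2
    have e1 : (S ∪ U1) \ S = U1 := Finset.union_sdiff_cancel_left hd1
    have e2 : (S ∪ U2) \ S = U2 := Finset.union_sdiff_cancel_left hd2
    rw [← e1, ← e2, he]
  have h2 : RS μ F S = ∑ T ∈ (((Finset.univ : Finset (Finset (Fin k))).erase ∅).filter
      (fun U => Disjoint S U)).image (fun U => S ∪ U), (bcoeff μ F T)^2 := by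
    rw [h1, Finset.sum_image hinj]
  have hsub : (((Finset.univ : Finset (Finset (Fin k))).erase ∅).filter
      (fun U => Disjoint S U)).image (fun U => S ∪ U)
      ⊆ Finset.univ.filter (fun T => S ⊂ T) := by
    intro T hT
    obtain ⟨U, hU, rfl⟩ := Finset.mem_image.mp hT
    have hUe := Finset.mem_filter.mp hU
    have hUne : U ≠ ∅ := (Finset.mem_erase.mp hUe.1).1
    have hd : Disjoint S U := hUe.2
    rw [Finset.mem_filter]
    refine ⟨Finset.mem_univ _, ?_⟩
    rw [Finset.ssubset_iff_subset_ne]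
    refine ⟨Finset.subset_union_left, ?_⟩
    intro hEq
    have hUS : U ⊆ S := by
      intro u hu
      have : u ∈ S ∪ U := Finset.mem_union_right S hu
      rw [← hEq] at this
      exact this
    have : U = ∅ := Finset.eq_empty_of_forall_notMem fun u hu =>
      (Finset.disjoint_right.mp hd hu) (hUS hu)
    exact hUne this
  rw [h2, ← Finset.sum_filter]
  exact Finset.sum_le_sum_of_subset_of_nonneg hsub fun T _ _ => sq_nonneg _
end FEI
end part7

section part8
namespace FEI
variable {k : ℕ} {μ : Fin k → ℝ} {F : (Fin k → Bool) → ℝ}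

lemma RS_sum_le :
    ∑ S ∈ (Finset.univ : Finset (Finset (Fin k))).erase ∅, RS μ F S
      ≤ 2^k * ∑ T ∈ (Finset.univ : Finset (Finset (Fin k))).erase ∅,
          ((T.card : ℝ) - 1) * (bcoeff μ F T)^2 := by
  classical
  have step1 : ∑ S ∈ (Finset.univ : Finset (Finset (Fin k))).erase ∅, RS μ F S
      ≤ ∑ S ∈ (Finset.univ : Finset (Finset (Fin k))).erase ∅,
          ∑ T : Finset (Fin k), if S ⊂ T then (bcoeff μ F T)^2 else 0 :=
    Finset.sum_le_sum fun S _ => RS_le S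
  have step2 : ∑ S ∈ (Finset.univ : Finset (Finset (Fin k))).erase ∅,
      ∑ T : Finset (Fin k), (if S ⊂ T then (bcoeff μ F T)^2 else 0)
      = ∑ T : Finset (Fin k), ∑ S ∈ (Finset.univ : Finset (Finset (Fin k))).erase ∅,
          (if S ⊂ T then (bcoeff μ F T)^2 else 0) := Finset.sum_comm
  have step3 : ∀ T : Finset (Fin k),
      ∑ S ∈ (Finset.univ : Finset (Finset (Fin k))).erase ∅,
        (if S ⊂ T then (bcoeff μ F T)^2 else 0)
      = ((((Finset.univ : Finset (Finset (Fin k))).erase ∅).filter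
          (fun S => S ⊂ T)).card : ℝ) * (bcoeff μ F T)^2 := by
    intro T
    rw [← Finset.sum_filter, Finset.sum_const, nsmul_eq_mul]
  -- cardinality bound
  have hcard : ∀ T : Finset (Fin k), T ≠ ∅ →
      ((((Finset.univ : Finset (Finset (Fin k))).erase ∅).filter
        (fun S => S ⊂ T)).card : ℝ) ≤ 2^k * ((T.card : ℝ) - 1) := by
    intro T hT
    have hT1 : 1 ≤ T.card := Finset.card_pos.mpr (Finset.nonempty_iff_ne_empty.mpr hT)
    by_cases h2 : 2 ≤ T.card
    · have hle : (((Finset.univ : Finset (Finset (Fin k))).erase ∅).filter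
          (fun S => S ⊂ T)).card ≤ 2^k := by
        calc (((Finset.univ : Finset (Finset (Fin k))).erase ∅).filter
            (fun S => S ⊂ T)).card
            ≤ ((Finset.univ : Finset (Finset (Fin k))).erase ∅).card :=
              Finset.card_filter_le _ _
          _ ≤ (Finset.univ : Finset (Finset (Fin k))).card := Finset.card_le_card
              (Finset.erase_subset _ _)
          _ = 2^k := by
              rw [Finset.card_univ, Fintype.card_finset, Fintype.card_fin]
      have h1r : (1:ℝ) ≤ (T.card : ℝ) - 1 := by
        have : (2:ℝ) ≤ (T.card : ℝ) := by exact_mod_cast h2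
        linarith
      calc ((((Finset.univ : Finset (Finset (Fin k))).erase ∅).filter
          (fun S => S ⊂ T)).card : ℝ) ≤ 2^k := by exact_mod_cast hle
        _ = 2^k * 1 := (mul_one _).symm
        _ ≤ 2^k * ((T.card : ℝ) - 1) := by
            apply mul_le_mul_of_nonneg_left h1r (by positivity)
    · have hcard1 : T.card = 1 := by omega
      have hempty : (((Finset.univ : Finset (Finset (Fin k))).erase ∅).filter
          (fun S => S ⊂ T)) = ∅ := by
        apply Finset.eq_empty_of_forall_notMem
        intro S hS
        have h1' := Finset.mem_filter.mp hS
        have hSne : S ≠ ∅ := (Finset.mem_erase.mp h1'.1).1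
        have hlt : S.card < T.card := Finset.card_lt_card h1'.2
        rw [hcard1] at hlt
        have : S.card = 0 := by omega
        exact hSne (Finset.card_eq_zero.mp this)
      rw [hempty]
      simp [hcard1]
  -- assemble
  have step4 : ∑ T : Finset (Fin k),
      ((((Finset.univ : Finset (Finset (Fin k))).erase ∅).filter
        (fun S => S ⊂ T)).card : ℝ) * (bcoeff μ F T)^2
      = ∑ T ∈ (Finset.univ : Finset (Finset (Fin k))).erase ∅,
          ((((Finset.univ : Finset (Finset (Fin k))).erase ∅).filter
            (fun S => S ⊂ T)).card : ℝ) * (bcoeff μ F T)^2 := by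
    symm
    apply Finset.sum_subset (Finset.subset_univ _)
    intro T _ hT
    have hTe : T = ∅ := by
      by_contra hne
      exact hT (Finset.mem_erase.mpr ⟨hne, Finset.mem_univ T⟩)
    subst hTe
    have : (((Finset.univ : Finset (Finset (Fin k))).erase ∅).filter
        (fun S => S ⊂ (∅ : Finset (Fin k)))) = ∅ := by
      apply Finset.eq_empty_of_forall_notMem
      intro S hS
      exact Finset.not_ssubset_empty S (Finset.mem_filter.mp hS).2
    rw [this]
    simp
  have step5 : ∑ T ∈ (Finset.univ : Finset (Finset (Fin k))).erase ∅,
      ((((Finset.univ : Finset (Finset (Fin k))).erase ∅).filter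
        (fun S => S ⊂ T)).card : ℝ) * (bcoeff μ F T)^2
      ≤ ∑ T ∈ (Finset.univ : Finset (Finset (Fin k))).erase ∅,
          2^k * (((T.card : ℝ) - 1) * (bcoeff μ F T)^2) := by
    apply Finset.sum_le_sum
    intro T hT
    have hTne : T ≠ ∅ := (Finset.mem_erase.mp hT).1
    have := hcard T hTne
    have hsq : (0:ℝ) ≤ (bcoeff μ F T)^2 := sq_nonneg _
    calc ((((Finset.univ : Finset (Finset (Fin k))).erase ∅).filter
        (fun S => S ⊂ T)).card : ℝ) * (bcoeff μ F T)^2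
        ≤ (2^k * ((T.card : ℝ) - 1)) * (bcoeff μ F T)^2 :=
          mul_le_mul_of_nonneg_right this hsq
      _ = 2^k * (((T.card : ℝ) - 1) * (bcoeff μ F T)^2) := by ring
  calc ∑ S ∈ (Finset.univ : Finset (Finset (Fin k))).erase ∅, RS μ F S
      ≤ ∑ S ∈ (Finset.univ : Finset (Finset (Fin k))).erase ∅,
          ∑ T : Finset (Fin k), (if S ⊂ T then (bcoeff μ F T)^2 else 0) := step1
    _ = ∑ T : Finset (Fin k), ∑ S ∈ (Finset.univ : Finset (Finset (Fin k))).erase ∅,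
          (if S ⊂ T then (bcoeff μ F T)^2 else 0) := step2
    _ = ∑ T : Finset (Fin k),
          ((((Finset.univ : Finset (Finset (Fin k))).erase ∅).filter
            (fun S => S ⊂ T)).card : ℝ) * (bcoeff μ F T)^2 :=
        Finset.sum_congr rfl fun T _ => step3 T
    _ = ∑ T ∈ (Finset.univ : Finset (Finset (Fin k))).erase ∅,
          ((((Finset.univ : Finset (Finset (Fin k))).erase ∅).filter
            (fun S => S ⊂ T)).card : ℝ) * (bcoeff μ F T)^2 := step4
    _ ≤ ∑ T ∈ (Finset.univ : Finset (Finset (Fin k))).erase ∅,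
          2^k * (((T.card : ℝ) - 1) * (bcoeff μ F T)^2) := step5
    _ = 2^k * ∑ T ∈ (Finset.univ : Finset (Finset (Fin k))).erase ∅,
          ((T.card : ℝ) - 1) * (bcoeff μ F T)^2 := by rw [← Finset.mul_sum]

end FEI
end part8

section part9
open FEI in
theorem stmt15' {k : ℕ} (μ : Fin k → ℝ) (hμ : validBias μ)
    (F : (Fin k → Bool) → ℝ) (hF : ∀ x, F x = 1 ∨ F x = -1) :
    bEnt1 μ F ≤ (2 ^ (3 * k + 1) / Real.log 2) * (bInf μ F - bVar μ F) := by
  classical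
  by_cases hk : k = 0
  · subst hk
    have he : (Finset.univ : Finset (Finset (Fin 0))).erase ∅ = ∅ := by
      apply Finset.eq_empty_of_forall_notMem
      intro S hS
      exact (Finset.mem_erase.mp hS).1 (Finset.eq_empty_of_isEmpty S)
    have h1 : bEnt1 μ F = 0 := by rw [bEnt1, he, Finset.sum_empty]
    have h2 : bVar μ F = 0 := by rw [bVar, he, Finset.sum_empty]
    have h3 : bInf μ F = 0 := by
      rw [bInf]
      apply Finset.sum_eq_zero
      intro S _
      rw [Finset.eq_empty_of_isEmpty S]
      simp
    rw [h1, h2, h3]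
    norm_num
  · have hk1 : 1 ≤ k := Nat.one_le_iff_ne_zero.mpr hk
    set W := ∑ S ∈ (Finset.univ : Finset (Finset (Fin k))).erase ∅,
        ((S.card : ℝ) - 1) * (bcoeff μ F S)^2 with hWdef
    have hW : bInf μ F - bVar μ F = W := by
      have hInf : bInf μ F = ∑ S ∈ (Finset.univ : Finset (Finset (Fin k))).erase ∅,
          (S.card : ℝ) * (bcoeff μ F S)^2 := by
        rw [bInf]
        symm
        apply Finset.sum_subset (Finset.subset_univ _)
        intro S _ hS
        have hSe : S = ∅ := by
          by_contra hne
          exact hS (Finset.mem_erase.mpr ⟨hne, Finset.mem_univ S⟩)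
        subst hSe
        simp
      rw [hInf, bVar, hWdef, ← Finset.sum_sub_distrib]
      exact Finset.sum_congr rfl fun S _ => by ring
    have hWnn : 0 ≤ W := by
      apply Finset.sum_nonneg
      intro S hS
      have h1 : 1 ≤ S.card :=
        Finset.card_pos.mpr (Finset.nonempty_iff_ne_empty.mpr (Finset.mem_erase.mp hS).1)
      have : (1:ℝ) ≤ (S.card : ℝ) := by exact_mod_cast h1
      have := sq_nonneg (bcoeff μ F S)
      nlinarith
    -- main inequality on the log scale
    have hmain : ∑ S ∈ (Finset.univ : Finset (Finset (Fin k))).erase ∅,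
        (bcoeff μ F S)^2 * Real.log ((∏ i ∈ S, (1 - μ i ^ 2)) / (bcoeff μ F S)^2)
        ≤ 2^(3*k+1) * W := by
      have hper : ∀ S ∈ (Finset.univ : Finset (Finset (Fin k))).erase ∅,
          (bcoeff μ F S)^2 * Real.log ((∏ i ∈ S, (1 - μ i ^ 2)) / (bcoeff μ F S)^2)
          ≤ 2^(S.card + 1) * RS μ F S
            + (if 2 ≤ S.card then 2*S.card*Real.log 2 * (bcoeff μ F S)^2 else 0) := by
        intro S hS
        exact perS hμ hF S (Finset.nonempty_iff_ne_empty.mpr (Finset.mem_erase.mp hS).1)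
      have hSig1 : ∑ S ∈ (Finset.univ : Finset (Finset (Fin k))).erase ∅,
          (2:ℝ)^(S.card + 1) * RS μ F S ≤ 2^(k+1) * (2^k * W) := by
        have e1 : ∀ S ∈ (Finset.univ : Finset (Finset (Fin k))).erase ∅,
            (2:ℝ)^(S.card + 1) * RS μ F S ≤ 2^(k+1) * RS μ F S := by
          intro S _
          apply mul_le_mul_of_nonneg_right _ (RS_nonneg S)
          apply pow_le_pow_right₀ (by norm_num : (1:ℝ) ≤ 2)
          have : S.card ≤ k := by
            have := Finset.card_le_univ S
            simpa using this
          omega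
        calc ∑ S ∈ (Finset.univ : Finset (Finset (Fin k))).erase ∅,
            (2:ℝ)^(S.card + 1) * RS μ F S
            ≤ ∑ S ∈ (Finset.univ : Finset (Finset (Fin k))).erase ∅,
              (2:ℝ)^(k+1) * RS μ F S := Finset.sum_le_sum e1
          _ = 2^(k+1) * ∑ S ∈ (Finset.univ : Finset (Finset (Fin k))).erase ∅,
              RS μ F S := by rw [← Finset.mul_sum]
          _ ≤ 2^(k+1) * (2^k * W) := by
              apply mul_le_mul_of_nonneg_left _ (by positivity)
              exact RS_sum_le
      have hSig2 : ∑ S ∈ (Finset.univ : Finset (Finset (Fin k))).erase ∅,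
          (if 2 ≤ S.card then 2*S.card*Real.log 2 * (bcoeff μ F S)^2 else 0) ≤ 3 * W := by
        have e2 : ∀ S ∈ (Finset.univ : Finset (Finset (Fin k))).erase ∅,
            (if 2 ≤ S.card then 2*S.card*Real.log 2 * (bcoeff μ F S)^2 else 0)
            ≤ 3 * (((S.card : ℝ) - 1) * (bcoeff μ F S)^2) := by
          intro S hS
          have h1 : 1 ≤ S.card := Finset.card_pos.mpr
            (Finset.nonempty_iff_ne_empty.mpr (Finset.mem_erase.mp hS).1)
          by_cases h2 : 2 ≤ S.card
          · rw [if_pos h2]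
            have hc2 : (2:ℝ) ≤ (S.card : ℝ) := by exact_mod_cast h2
            have hlog := Real.log_two_lt_d9
            have hlogpos : (0:ℝ) ≤ Real.log 2 := Real.log_nonneg (by norm_num)
            have hsq : (0:ℝ) ≤ (bcoeff μ F S)^2 := sq_nonneg _
            have hcoef : 2*(S.card:ℝ)*Real.log 2 ≤ 3*((S.card:ℝ) - 1) := by
              nlinarith
            nlinarith
          · rw [if_neg h2]
            have hc1 : (1:ℝ) ≤ (S.card : ℝ) := by exact_mod_cast h1
            have hsq : (0:ℝ) ≤ (bcoeff μ F S)^2 := sq_nonneg _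
            nlinarith
        calc ∑ S ∈ (Finset.univ : Finset (Finset (Fin k))).erase ∅,
            (if 2 ≤ S.card then 2*S.card*Real.log 2 * (bcoeff μ F S)^2 else 0)
            ≤ ∑ S ∈ (Finset.univ : Finset (Finset (Fin k))).erase ∅,
              3 * (((S.card : ℝ) - 1) * (bcoeff μ F S)^2) := Finset.sum_le_sum e2
          _ = 3 * W := by rw [← Finset.mul_sum]
      have hcoef : (2:ℝ)^(k+1) * 2^k + 3 ≤ 2^(3*k+1) := by
        have h1 : (2:ℝ)^(k+1) * 2^k = 2^(2*k+1) := by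
          rw [← pow_add]
          congr 1
          omega
        have h2 : (2:ℝ)^(2*k+1) * 2^k = 2^(3*k+1) := by
          rw [← pow_add]
          congr 1
          omega
        have h3 : (2:ℝ) ≤ 2^k := by
          calc (2:ℝ) = 2^1 := (pow_one 2).symm
            _ ≤ 2^k := pow_le_pow_right₀ (by norm_num) hk1
        have h4 : (8:ℝ) ≤ 2^(2*k+1) := by
          calc (8:ℝ) = 2^3 := by norm_num
            _ ≤ 2^(2*k+1) := pow_le_pow_right₀ (by norm_num) (by omega)
        nlinarith
      calc ∑ S ∈ (Finset.univ : Finset (Finset (Fin k))).erase ∅,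
          (bcoeff μ F S)^2 * Real.log ((∏ i ∈ S, (1 - μ i ^ 2)) / (bcoeff μ F S)^2)
          ≤ ∑ S ∈ (Finset.univ : Finset (Finset (Fin k))).erase ∅,
            ((2:ℝ)^(S.card + 1) * RS μ F S
              + (if 2 ≤ S.card then 2*S.card*Real.log 2 * (bcoeff μ F S)^2 else 0)) :=
            Finset.sum_le_sum hper
        _ = (∑ S ∈ (Finset.univ : Finset (Finset (Fin k))).erase ∅,
              (2:ℝ)^(S.card + 1) * RS μ F S)
            + ∑ S ∈ (Finset.univ : Finset (Finset (Fin k))).erase ∅,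
              (if 2 ≤ S.card then 2*S.card*Real.log 2 * (bcoeff μ F S)^2 else 0) :=
            Finset.sum_add_distrib
        _ ≤ 2^(k+1) * (2^k * W) + 3 * W := add_le_add hSig1 hSig2
        _ ≤ 2^(3*k+1) * W := by nlinarith [hcoef, hWnn]
    -- convert logb to log
    have hEnt : bEnt1 μ F = (∑ S ∈ (Finset.univ : Finset (Finset (Fin k))).erase ∅,
        (bcoeff μ F S)^2 * Real.log ((∏ i ∈ S, (1 - μ i ^ 2)) / (bcoeff μ F S)^2))
          / Real.log 2 := by
      rw [bEnt1]
      have : ∀ S : Finset (Fin k), (bcoeff μ F S)^2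
          * Real.logb 2 ((∏ i ∈ S, (1 - μ i ^ 2)) / (bcoeff μ F S)^2)
          = ((bcoeff μ F S)^2 * Real.log ((∏ i ∈ S, (1 - μ i ^ 2)) / (bcoeff μ F S)^2))
              / Real.log 2 := by
        intro S
        rw [Real.logb]
        ring
      rw [Finset.sum_congr rfl fun S _ => this S, ← Finset.sum_div]
    have hlog2 : (0:ℝ) < Real.log 2 := Real.log_pos (by norm_num)
    rw [hEnt, hW]
    rw [div_mul_eq_mul_div]
    exact div_le_div_of_nonneg_right hmain (le_of_lt hlog2)
end part9

/-- Distribution-independent FEI⁺ bound: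
`H^μ[F^{≥1}] ≤ (2^{3k+1}/ln 2) (Inf^μ[F] − Var_μ[F])`. -/
theorem stmt15 {k : ℕ} (μ : Fin k → ℝ) (hμ : validBias μ)
    (F : (Fin k → Bool) → ℝ) (hF : ∀ x, F x = 1 ∨ F x = -1) :
    bEnt1 μ F ≤ (2 ^ (3 * k + 1) / Real.log 2) * (bInf μ F - bVar μ F) := by
  exact stmt15' μ hμ F hF
end
end

section
/- Amplification lemma: let F : {-1,1}^k → {-1,1} and g : {-1,1}^ℓ → {-1,1} be balanced (E[F] = E[g] = 0) Boolean functions, and define f₀ = g, f_m = F(f_{m-1}(x¹),...,f_{m-1}(x^k)) on disjoint variable blocks. Then H[f_m] = H[g]·Inf[F]^m + H[F]·(Inf[F]^m − 1)/(Inf[F] − 1) and Inf[f_m] = Inf[g]·Inf[F]^m, assuming Inf[F] ≠ 1. All quantities are with respect to the uniform distribution. -/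
open Finset Real

noncomputable section

variable {ι : Type*} [Fintype ι] [DecidableEq ι]

/-- Index type for `m`-fold iterated disjoint composition: `k^m` blocks of `ℓ` variables. -/
def Idx (k l : ℕ) : ℕ → Type
  | 0 => Fin l
  | m + 1 => Fin k × Idx k l m

instance Idx.instFintype (k l : ℕ) : (m : ℕ) → Fintype (Idx k l m)
  | 0 => inferInstanceAs (Fintype (Fin l))
  | m + 1 => letI := Idx.instFintype k l m; inferInstanceAs (Fintype (Fin k × Idx k l m))

instance Idx.instDecidableEq (k l : ℕ) : (m : ℕ) → DecidableEq (Idx k l m)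
  | 0 => inferInstanceAs (DecidableEq (Fin l))
  | m + 1 => letI := Idx.instDecidableEq k l m
             inferInstanceAs (DecidableEq (Fin k × Idx k l m))

namespace S17

def chi (S : Finset ι) (x : ι → Bool) : ℝ := ∏ i ∈ S, b2r (x i)

lemma b2r_sq (b : Bool) : (b2r b) ^ 2 = 1 := by cases b <;> simp [b2r]

lemma cardR_ne : (Fintype.card (ι → Bool) : ℝ) ≠ 0 := by
  exact_mod_cast Fintype.card_ne_zero

lemma coeff_def (f : (ι → Bool) → ℝ) (S : Finset ι) :
    coeff f S = (∑ x : ι → Bool, f x * chi S x) / (Fintype.card (ι → Bool) : ℝ) := rfl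

lemma sum_chi (A : Finset ι) :
    ∑ x : ι → Bool, chi A x = if A = ∅ then (Fintype.card (ι → Bool) : ℝ) else 0 := by
  have h1 : ∀ x : ι → Bool, chi A x = ∏ i, (if i ∈ A then b2r (x i) else 1) := by
    intro x
    rw [Fintype.prod_ite_mem A (fun i => b2r (x i))]
    rfl
  simp only [h1]
  rw [← Fintype.prod_sum (fun i (b : Bool) => if i ∈ A then b2r b else 1)]
  have h2 : ∀ i : ι, (∑ b : Bool, if i ∈ A then b2r b else 1) = if i ∈ A then 0 else 2 := by
    intro i; split <;> simp [b2r]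
  simp only [h2]
  by_cases hA : A = ∅
  · simp [hA, Fintype.card_fun]
  · obtain ⟨a, ha⟩ := Finset.nonempty_iff_ne_empty.mpr hA
    rw [if_neg hA]
    exact Finset.prod_eq_zero (mem_univ a) (by simp [ha])

lemma sum_chi_pair (x y : ι → Bool) :
    ∑ S : Finset ι, chi S x * chi S y
      = if x = y then (Fintype.card (ι → Bool) : ℝ) else 0 := by
  have h1 : ∀ S : Finset ι, chi S x * chi S y = ∏ i ∈ S, (b2r (x i) * b2r (y i)) := by
    intro S; rw [Finset.prod_mul_distrib]; rfl
  simp only [h1]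
  have h2 : ∑ S : Finset ι, ∏ i ∈ S, (b2r (x i) * b2r (y i))
      = ∏ i, (b2r (x i) * b2r (y i) + 1) := by
    rw [Fintype.prod_add]
    simp
  rw [h2]
  by_cases hxy : x = y
  · subst hxy
    rw [if_pos rfl]
    have : ∀ i : ι, b2r (x i) * b2r (x i) + 1 = 2 := by
      intro i; have := b2r_sq (x i); nlinarith
    simp only [this]
    simp [Fintype.card_fun]
  · rw [if_neg hxy]
    have : ∃ i, x i ≠ y i := by
      by_contra hc; push_neg at hc; exact hxy (funext hc)
    obtain ⟨i, hi⟩ := this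
    refine Finset.prod_eq_zero (mem_univ i) ?_
    cases hx : x i <;> cases hy : y i <;> simp_all [b2r]

lemma expansion (f : (ι → Bool) → ℝ) (y : ι → Bool) :
    ∑ S : Finset ι, coeff f S * chi S y = f y := by
  calc ∑ S : Finset ι, coeff f S * chi S y
      = ∑ S : Finset ι, (∑ x : ι → Bool, f x * chi S x * chi S y)
          / (Fintype.card (ι → Bool) : ℝ) := by
        simp only [coeff_def, div_mul_eq_mul_div, Finset.sum_mul]
    _ = (∑ x : ι → Bool, f x * ∑ S : Finset ι, chi S x * chi S y)
          / (Fintype.card (ι → Bool) : ℝ) := by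
        rw [← Finset.sum_div, Finset.sum_comm]
        congr 1
        refine Finset.sum_congr rfl fun x _ => ?_
        rw [Finset.mul_sum]
        exact Finset.sum_congr rfl fun S _ => (mul_assoc _ _ _)
    _ = f y := by
        simp only [sum_chi_pair, mul_ite, mul_zero]
        rw [Finset.sum_ite_eq' univ y]
        simp [mul_div_assoc, div_self (cardR_ne (ι := ι))]

lemma parseval (f : (ι → Bool) → ℝ) :
    ∑ S : Finset ι, coeff f S ^ 2
      = (∑ x : ι → Bool, f x ^ 2) / (Fintype.card (ι → Bool) : ℝ) := by
  calc ∑ S : Finset ι, coeff f S ^ 2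
      = ∑ S : Finset ι, (∑ x : ι → Bool, f x * chi S x * coeff f S)
          / (Fintype.card (ι → Bool) : ℝ) := by
        refine Finset.sum_congr rfl fun S _ => ?_
        rw [sq, coeff_def, div_mul_eq_mul_div, Finset.sum_mul]
    _ = (∑ x : ι → Bool, f x * ∑ S : Finset ι, coeff f S * chi S x)
          / (Fintype.card (ι → Bool) : ℝ) := by
        rw [← Finset.sum_div, Finset.sum_comm]
        congr 1
        refine Finset.sum_congr rfl fun x _ => ?_
        rw [Finset.mul_sum]
        refine Finset.sum_congr rfl fun S _ => ?_
        ring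
    _ = _ := by
        congr 1
        refine Finset.sum_congr rfl fun x _ => ?_
        rw [expansion, sq]

lemma parseval_bool (h : (ι → Bool) → Bool) :
    ∑ S : Finset ι, coeff (fun z => b2r (h z)) S ^ 2 = 1 := by
  rw [parseval]
  simp only [b2r_sq]
  rw [Finset.sum_const, Finset.card_univ, nsmul_eq_mul, mul_one]
  exact div_self (cardR_ne (ι := ι))


variable {κ : Type*} [Fintype κ] [DecidableEq κ]

def slice (S : Finset (κ × ι)) (i : κ) : Finset ι := univ.filter fun t => (i, t) ∈ S

def supp (S : Finset (κ × ι)) : Finset κ := univ.filter fun i => slice S i ≠ ∅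

lemma mem_slice {S : Finset (κ × ι)} {i : κ} {t : ι} : t ∈ slice S i ↔ (i, t) ∈ S := by
  simp [slice]

lemma mem_supp {S : Finset (κ × ι)} {i : κ} : i ∈ supp S ↔ slice S i ≠ ∅ := by
  simp [supp]

lemma card_slice_sum (S : Finset (κ × ι)) : S.card = ∑ i, (slice S i).card := by
  have h1 : S.card = ∑ p : κ × ι, if p ∈ S then 1 else 0 := by
    rw [Finset.card_eq_sum_ones, ← Fintype.sum_ite_mem S (fun _ => 1)]
  rw [h1, Fintype.sum_prod_type]
  refine Finset.sum_congr rfl fun i _ => ?_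
  show _ = (univ.filter fun t => (i, t) ∈ S).card
  rw [Finset.card_filter]

lemma chi_split (S : Finset (κ × ι)) (x : κ × ι → Bool) :
    chi S x = ∏ i, chi (slice S i) (fun t => x (i, t)) := by
  unfold chi
  rw [← Fintype.prod_ite_mem S (fun p => b2r (x p)), Fintype.prod_prod_type]
  refine Finset.prod_congr rfl fun i _ => ?_
  rw [← Fintype.prod_ite_mem (slice S i) (fun t => b2r (x (i, t)))]
  refine Finset.prod_congr rfl fun t _ => ?_
  simp [mem_slice]

def emb : (κ → Finset ι) ≃ Finset (κ × ι) where
  toFun s := univ.filter fun p => p.2 ∈ s p.1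
  invFun S i := slice S i
  left_inv s := by funext i; ext t; simp [slice]
  right_inv S := by ext ⟨i, t⟩; simp [slice]

lemma slice_emb (s : κ → Finset ι) (i : κ) : slice (emb s) i = s i := by
  ext t; simp [slice, emb]

lemma supp_emb (s : κ → Finset ι) : supp (emb s) = univ.filter fun i => s i ≠ ∅ := by
  simp [supp, slice_emb]

lemma card_pow : (Fintype.card (κ × ι → Bool) : ℝ)
    = (Fintype.card (ι → Bool) : ℝ) ^ (Fintype.card κ) := by
  rw [Fintype.card_fun, Fintype.card_fun, Fintype.card_prod]
  push_cast
  rw [mul_comm, pow_mul]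


lemma coeff_comp (F : (κ → Bool) → Bool) (h : (ι → Bool) → Bool)
    (hbal : coeff (fun z => b2r (h z)) (∅ : Finset ι) = 0) (S : Finset (κ × ι)) :
    coeff (fun x : κ × ι → Bool => b2r (F fun i => h fun t => x (i, t))) S
      = coeff (fun y => b2r (F y)) (supp S)
          * ∏ i ∈ supp S, coeff (fun z => b2r (h z)) (slice S i) := by
  set M := (Fintype.card (ι → Bool) : ℝ) with hM
  have hMne : M ≠ 0 := cardR_ne
  have key : ∑ x : κ × ι → Bool, b2r (F fun i => h fun t => x (i, t)) * chi S x
      = ∑ T : Finset κ, coeff (fun y => b2r (F y)) T *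
          ∏ i, (if i ∈ T then M * coeff (fun z => b2r (h z)) (slice S i)
                else if slice S i = ∅ then M else 0) := by
    have step1 : ∀ x : κ × ι → Bool,
        b2r (F fun i => h fun t => x (i, t)) * chi S x
          = ∑ T : Finset κ, coeff (fun y => b2r (F y)) T *
              ∏ i, ((if i ∈ T then b2r (h fun t => x (i, t)) else 1)
                      * chi (slice S i) (fun t => x (i, t))) := by
      intro x
      conv_lhs => rw [← expansion (fun y => b2r (F y)) (fun i => h fun t => x (i, t))]
      rw [Finset.sum_mul]
      refine Finset.sum_congr rfl fun T _ => ?_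
      rw [mul_assoc]
      congr 1
      rw [chi_split S x, Finset.prod_mul_distrib]
      congr 1
      exact (Fintype.prod_ite_mem T fun i => b2r (h fun t => x (i, t))).symm
    simp only [step1]
    rw [Finset.sum_comm]
    refine Finset.sum_congr rfl fun T _ => ?_
    rw [← Finset.mul_sum]
    congr 1
    have e1 : ∑ x : κ × ι → Bool,
        ∏ i, ((if i ∈ T then b2r (h fun t => x (i, t)) else 1)
                * chi (slice S i) (fun t => x (i, t)))
        = ∑ y : κ → ι → Bool,
        ∏ i, ((if i ∈ T then b2r (h (y i)) else 1) * chi (slice S i) (y i)) :=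
      Fintype.sum_equiv (Equiv.curry κ ι Bool) _ _ (fun x => rfl)
    rw [e1, ← Fintype.prod_sum
      (fun i (z : ι → Bool) => (if i ∈ T then b2r (h z) else 1) * chi (slice S i) z)]
    refine Finset.prod_congr rfl fun i _ => ?_
    by_cases hiT : i ∈ T
    · simp only [if_pos hiT]
      rw [coeff_def, mul_div_cancel₀ _ hMne]
    · simp only [if_neg hiT, one_mul]
      exact sum_chi _
  rw [coeff_def, key, Finset.sum_eq_single (supp S)]
  · have hprod : ∏ i, (if i ∈ supp S then M * coeff (fun z => b2r (h z)) (slice S i)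
        else if slice S i = ∅ then M else 0)
        = M ^ (Fintype.card κ) * ∏ i ∈ supp S, coeff (fun z => b2r (h z)) (slice S i) := by
      rw [← Finset.prod_mul_prod_compl (supp S)]
      have h1 : ∏ i ∈ supp S, (if i ∈ supp S then M * coeff (fun z => b2r (h z)) (slice S i)
          else if slice S i = ∅ then M else 0)
          = M ^ (supp S).card * ∏ i ∈ supp S, coeff (fun z => b2r (h z)) (slice S i) := by
        rw [← Finset.prod_const, ← Finset.prod_mul_distrib]
        exact Finset.prod_congr rfl fun i hi => by rw [if_pos hi]
      have h2 : ∏ i ∈ (supp S)ᶜ, (if i ∈ supp S then M * coeff (fun z => b2r (h z)) (slice S i)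
          else if slice S i = ∅ then M else 0) = M ^ (supp S)ᶜ.card := by
        rw [← Finset.prod_const]
        refine Finset.prod_congr rfl fun i hi => ?_
        rw [Finset.mem_compl] at hi
        have hempty : slice S i = ∅ := by
          by_contra hne; exact hi (mem_supp.mpr hne)
        rw [if_neg hi, if_pos hempty]
      rw [h1, h2]
      rw [mul_right_comm, ← pow_add, Finset.card_add_card_compl]
    rw [hprod, card_pow, ← hM]
    field_simp
  · intro T _ hT
    have : ∃ i, ¬ (i ∈ T ↔ i ∈ supp S) := by
      by_contra hc; push_neg at hc
      exact hT (Finset.ext fun i => hc i)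
    obtain ⟨i₀, hi₀⟩ := this
    have hzero : (∏ i, (if i ∈ T then M * coeff (fun z => b2r (h z)) (slice S i)
        else if slice S i = ∅ then M else 0)) = 0 := by
      refine Finset.prod_eq_zero (mem_univ i₀) ?_
      by_cases h1 : i₀ ∈ T
      · have h2 : i₀ ∉ supp S := fun hs => hi₀ (iff_of_true h1 hs)
        have hempty : slice S i₀ = ∅ := by
          by_contra hne; exact h2 (mem_supp.mpr hne)
        rw [if_pos h1, hempty, hbal, mul_zero]
      · have h2 : i₀ ∈ supp S := by
          by_contra hs; exact hi₀ (iff_of_false h1 hs)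
        rw [if_neg h1, if_neg (mem_supp.mp h2)]
    rw [hzero, mul_zero]
  · intro hn; exact absurd (mem_univ _) hn

lemma comp_totalInf (F : (κ → Bool) → Bool) (h : (ι → Bool) → Bool)
    (hbal : coeff (fun z => b2r (h z)) (∅ : Finset ι) = 0) :
    totalInf (fun x : κ × ι → Bool => b2r (F fun i => h fun t => x (i, t)))
      = totalInf (fun y => b2r (F y)) * totalInf (fun z => b2r (h z)) := by
  classical
  set ch : Finset ι → ℝ := fun A => coeff (fun z => b2r (h z)) A with hch
  set cF : Finset κ → ℝ := fun T => coeff (fun y => b2r (F y)) T with hcF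
  have Ph : ∑ A : Finset ι, ch A ^ 2 = 1 := parseval_bool h
  set Ts : (κ → Finset ι) → Finset κ := fun s => univ.filter fun i => s i ≠ ∅ with hTs
  set w : Finset κ → κ → κ → Finset ι → ℝ := fun T j i A =>
    (if i ∈ T then ch A ^ 2 else if A = ∅ then 1 else 0)
      * (if i = j then (A.card : ℝ) else 1) with hw
  have point : ∀ s : κ → Finset ι,
      ∑ T : Finset κ, cF T ^ 2 * ∑ j ∈ T, ∏ i, w T j i (s i)
        = (∑ i, ((s i).card : ℝ)) * (cF (Ts s) * ∏ i ∈ Ts s, ch (s i)) ^ 2 := by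
    intro s
    rw [Finset.sum_eq_single (Ts s)]
    · have hP : ∀ j ∈ Ts s, ∏ i, w (Ts s) j i (s i)
          = (∏ i ∈ Ts s, ch (s i) ^ 2) * ((s j).card : ℝ) := by
        intro j hj
        simp only [hw]
        rw [Finset.prod_mul_distrib]
        congr 1
        · rw [← Finset.prod_mul_prod_compl (Ts s)]
          have e1 : ∏ i ∈ Ts s, (if i ∈ Ts s then ch (s i) ^ 2 else if s i = ∅ then 1 else 0)
              = ∏ i ∈ Ts s, ch (s i) ^ 2 :=
            Finset.prod_congr rfl fun i hi => by rw [if_pos hi]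
          have e2 : ∏ i ∈ (Ts s)ᶜ, (if i ∈ Ts s then ch (s i) ^ 2 else if s i = ∅ then 1 else 0)
              = 1 := by
            refine Finset.prod_eq_one fun i hi => ?_
            rw [Finset.mem_compl] at hi
            have hemp : s i = ∅ := by
              by_contra hne
              exact hi (by simp only [hTs]; exact Finset.mem_filter.mpr ⟨mem_univ _, hne⟩)
            rw [if_neg hi, if_pos hemp]
          rw [e1, e2, mul_one]
        · exact Fintype.prod_ite_eq' j fun i => ((s i).card : ℝ)
      rw [Finset.sum_congr rfl hP]
      have hsum : ∑ i, ((s i).card : ℝ) = ∑ j ∈ Ts s, ((s j).card : ℝ) := by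
        symm
        apply Finset.sum_subset (Finset.subset_univ _)
        intro i _ hi
        have hemp : s i = ∅ := by
          by_contra hne
          exact hi (by simp only [hTs]; exact Finset.mem_filter.mpr ⟨mem_univ _, hne⟩)
        simp [hemp]
      rw [hsum, ← Finset.mul_sum, mul_pow, ← Finset.prod_pow]
      ring
    · intro T _ hT
      have hex : ∃ i, ¬ (i ∈ T ↔ i ∈ Ts s) := by
        by_contra hc; push_neg at hc; exact hT (Finset.ext fun i => hc i)
      obtain ⟨i₀, hi₀⟩ := hex
      have hz : ∀ j, ∏ i, w T j i (s i) = 0 := by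
        intro j
        refine Finset.prod_eq_zero (mem_univ i₀) ?_
        simp only [hw]
        by_cases h1 : i₀ ∈ T
        · have h2 : i₀ ∉ Ts s := fun hs => hi₀ (iff_of_true h1 hs)
          have hemp : s i₀ = ∅ := by
            by_contra hne
            exact h2 (by simp only [hTs]; exact Finset.mem_filter.mpr ⟨mem_univ _, hne⟩)
          rw [if_pos h1, hemp, show ch ∅ = 0 from hbal]
          simp
        · have h2 : i₀ ∈ Ts s := by
            by_contra hs; exact hi₀ (iff_of_false h1 hs)
          have hne : s i₀ ≠ ∅ := by
            simp only [hTs] at h2; exact (Finset.mem_filter.mp h2).2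
          rw [if_neg h1, if_neg hne, zero_mul]
      simp [hz]
    · intro hn; exact absurd (mem_univ _) hn
  have transfer : ∀ G : Finset (κ × ι) → ℝ,
      ∑ S : Finset (κ × ι), G S = ∑ s : κ → Finset ι, G (emb s) :=
    fun G => (Fintype.sum_equiv emb _ G fun s => rfl).symm
  unfold totalInf
  rw [transfer (fun S => (S.card : ℝ)
    * coeff (fun x : κ × ι → Bool => b2r (F fun i => h fun t => x (i, t))) S ^ 2)]
  have rewr : ∀ s : κ → Finset ι,
      ((emb s).card : ℝ)
          * coeff (fun x : κ × ι → Bool => b2r (F fun i => h fun t => x (i, t))) (emb s) ^ 2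
        = (∑ i, ((s i).card : ℝ)) * (cF (Ts s) * ∏ i ∈ Ts s, ch (s i)) ^ 2 := by
    intro s
    rw [coeff_comp F h hbal (emb s), card_slice_sum (emb s), supp_emb]
    simp only [slice_emb, hTs, hcF, hch]
    push_cast
    rfl
  rw [Finset.sum_congr rfl fun s _ => rewr s]
  rw [Finset.sum_congr rfl fun s _ => (point s).symm]
  rw [Finset.sum_comm]
  have inner : ∀ T : Finset κ,
      ∑ s : κ → Finset ι, cF T ^ 2 * ∑ j ∈ T, ∏ i, w T j i (s i)
        = cF T ^ 2 * ((T.card : ℝ) * totalInf (fun z => b2r (h z))) := by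
    intro T
    rw [← Finset.mul_sum]
    congr 1
    rw [Finset.sum_comm]
    have hfac : ∀ j ∈ T, ∑ s : κ → Finset ι, ∏ i, w T j i (s i)
        = totalInf (fun z => b2r (h z)) := by
      intro j hj
      rw [show (∑ s : κ → Finset ι, ∏ i, w T j i (s i))
          = ∏ i, ∑ A : Finset ι, w T j i A from (Fintype.prod_sum _).symm]
      rw [Finset.prod_eq_single j]
      · simp only [hw, if_pos hj]
        unfold totalInf
        refine Finset.sum_congr rfl fun A _ => ?_
        simp only [if_true]
        simp only [hch]
        ring
      · intro i _ hij
        simp only [hw, if_neg hij, mul_one]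
        by_cases hiT : i ∈ T
        · simp only [if_pos hiT]; exact Ph
        · simp only [if_neg hiT]; simp
      · intro hn; exact absurd (mem_univ _) hn
    rw [Finset.sum_congr rfl hfac, Finset.sum_const, nsmul_eq_mul]
  rw [Finset.sum_congr rfl fun T _ => inner T]
  simp only [hcF]
  unfold totalInf
  rw [Finset.sum_mul]
  exact Finset.sum_congr rfl fun T _ => by ring

lemma logb_split (a : ℝ) (T : Finset κ) (p : κ → ℝ) (ha : a ≠ 0) (hp : ∀ j ∈ T, p j ≠ 0) :
    Real.logb 2 (1 / (a * ∏ j ∈ T, p j))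
      = Real.logb 2 (1 / a) + ∑ j ∈ T, Real.logb 2 (1 / p j) := by
  have hP : (∏ j ∈ T, p j) ≠ 0 := Finset.prod_ne_zero_iff.mpr hp
  simp only [Real.logb, one_div, Real.log_inv]
  rw [Real.log_mul ha hP, Real.log_prod hp, neg_add, add_div]
  congr 1
  rw [← Finset.sum_div]
  congr 1
  rw [← Finset.sum_neg_distrib]

lemma ent_split (a : ℝ) (T : Finset κ) (p : κ → ℝ) :
    (a * ∏ j ∈ T, p j) * Real.logb 2 (1 / (a * ∏ j ∈ T, p j))
      = a * Real.logb 2 (1 / a) * ∏ j ∈ T, p j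
        + a * ∑ j ∈ T, (∏ i ∈ T, p i) * Real.logb 2 (1 / p j) := by
  by_cases ha : a = 0
  · simp [ha]
  by_cases hp : ∀ j ∈ T, p j ≠ 0
  · rw [logb_split a T p ha hp, mul_add]
    congr 1
    · ring
    · rw [Finset.mul_sum, Finset.mul_sum]
      exact Finset.sum_congr rfl fun j hj => by ring
  · push_neg at hp
    obtain ⟨j₀, hj₀, hpj⟩ := hp
    have hP : ∏ j ∈ T, p j = 0 := Finset.prod_eq_zero hj₀ hpj
    rw [hP]
    simp

lemma comp_specEnt (F : (κ → Bool) → Bool) (h : (ι → Bool) → Bool)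
    (hbal : coeff (fun z => b2r (h z)) (∅ : Finset ι) = 0) :
    specEnt (fun x : κ × ι → Bool => b2r (F fun i => h fun t => x (i, t)))
      = totalInf (fun y => b2r (F y)) * specEnt (fun z => b2r (h z))
        + specEnt (fun y => b2r (F y)) := by
  classical
  set ch : Finset ι → ℝ := fun A => coeff (fun z => b2r (h z)) A with hch
  set cF : Finset κ → ℝ := fun T => coeff (fun y => b2r (F y)) T with hcF
  have Ph : ∑ A : Finset ι, ch A ^ 2 = 1 := parseval_bool h
  set Ts : (κ → Finset ι) → Finset κ := fun s => univ.filter fun i => s i ≠ ∅ with hTs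
  set u : Finset κ → κ → Finset ι → ℝ := fun T i A =>
    (if i ∈ T then ch A ^ 2 else if A = ∅ then 1 else 0) with hu
  set wE : Finset κ → κ → κ → Finset ι → ℝ := fun T j i A =>
    u T i A * (if i = j then Real.logb 2 (1 / ch A ^ 2) else 1) with hwE
  have uTs : ∀ s : κ → Finset ι, ∏ i, u (Ts s) i (s i) = ∏ i ∈ Ts s, ch (s i) ^ 2 := by
    intro s
    rw [← Finset.prod_mul_prod_compl (Ts s)]
    have e1 : ∏ i ∈ Ts s, u (Ts s) i (s i) = ∏ i ∈ Ts s, ch (s i) ^ 2 :=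
      Finset.prod_congr rfl fun i hi => by simp only [hu]; rw [if_pos hi]
    have e2 : ∏ i ∈ (Ts s)ᶜ, u (Ts s) i (s i) = 1 := by
      refine Finset.prod_eq_one fun i hi => ?_
      rw [Finset.mem_compl] at hi
      have hemp : s i = ∅ := by
        by_contra hne
        exact hi (by simp only [hTs]; exact Finset.mem_filter.mpr ⟨mem_univ _, hne⟩)
      simp only [hu]
      rw [if_neg hi, if_pos hemp]
    rw [e1, e2, mul_one]
  have point : ∀ s : κ → Finset ι,
      ∑ T : Finset κ, (cF T ^ 2 * Real.logb 2 (1 / cF T ^ 2) * ∏ i, u T i (s i)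
          + cF T ^ 2 * ∑ j ∈ T, ∏ i, wE T j i (s i))
        = (cF (Ts s) * ∏ i ∈ Ts s, ch (s i)) ^ 2
            * Real.logb 2 (1 / (cF (Ts s) * ∏ i ∈ Ts s, ch (s i)) ^ 2) := by
    intro s
    rw [Finset.sum_eq_single (Ts s)]
    · have hwEp : ∀ j ∈ Ts s, ∏ i, wE (Ts s) j i (s i)
          = (∏ i ∈ Ts s, ch (s i) ^ 2) * Real.logb 2 (1 / ch (s j) ^ 2) := by
        intro j hj
        simp only [hwE]
        rw [Finset.prod_mul_distrib, uTs s]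
        congr 1
        exact Fintype.prod_ite_eq' j fun i => Real.logb 2 (1 / ch (s i) ^ 2)
      rw [uTs s, Finset.sum_congr rfl hwEp]
      rw [mul_pow, ← Finset.prod_pow]
      exact (ent_split (cF (Ts s) ^ 2) (Ts s) (fun i => ch (s i) ^ 2)).symm
    · intro T _ hT
      have hex : ∃ i, ¬ (i ∈ T ↔ i ∈ Ts s) := by
        by_contra hc; push_neg at hc; exact hT (Finset.ext fun i => hc i)
      obtain ⟨i₀, hi₀⟩ := hex
      have hu0 : u T i₀ (s i₀) = 0 := by
        simp only [hu]
        by_cases h1 : i₀ ∈ T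
        · have h2 : i₀ ∉ Ts s := fun hs => hi₀ (iff_of_true h1 hs)
          have hemp : s i₀ = ∅ := by
            by_contra hne
            exact h2 (by simp only [hTs]; exact Finset.mem_filter.mpr ⟨mem_univ _, hne⟩)
          rw [if_pos h1, hemp, show ch ∅ = 0 from hbal]
          simp
        · have h2 : i₀ ∈ Ts s := by
            by_contra hs; exact hi₀ (iff_of_false h1 hs)
          have hne : s i₀ ≠ ∅ := by
            simp only [hTs] at h2; exact (Finset.mem_filter.mp h2).2
          rw [if_neg h1, if_neg hne]
      have hz1 : ∏ i, u T i (s i) = 0 := Finset.prod_eq_zero (mem_univ i₀) hu0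
      have hz2 : ∀ j, ∏ i, wE T j i (s i) = 0 := fun j =>
        Finset.prod_eq_zero (mem_univ i₀) (by simp only [hwE]; rw [hu0, zero_mul])
      simp [hz1, hz2]
    · intro hn; exact absurd (mem_univ _) hn
  have transfer : ∀ G : Finset (κ × ι) → ℝ,
      ∑ S : Finset (κ × ι), G S = ∑ s : κ → Finset ι, G (emb s) :=
    fun G => (Fintype.sum_equiv emb _ G fun s => rfl).symm
  rw [show specEnt (fun x : κ × ι → Bool => b2r (F fun i => h fun t => x (i, t)))
      = ∑ S : Finset (κ × ι),
          coeff (fun x : κ × ι → Bool => b2r (F fun i => h fun t => x (i, t))) S ^ 2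
            * Real.logb 2 (1 / coeff (fun x : κ × ι → Bool => b2r (F fun i => h fun t => x (i, t))) S ^ 2)
      from rfl]
  rw [transfer (fun S =>
    coeff (fun x : κ × ι → Bool => b2r (F fun i => h fun t => x (i, t))) S ^ 2
      * Real.logb 2 (1 / coeff (fun x : κ × ι → Bool => b2r (F fun i => h fun t => x (i, t))) S ^ 2))]
  have rewr : ∀ s : κ → Finset ι,
      coeff (fun x : κ × ι → Bool => b2r (F fun i => h fun t => x (i, t))) (emb s) ^ 2
          * Real.logb 2 (1 / coeff (fun x : κ × ι → Bool => b2r (F fun i => h fun t => x (i, t))) (emb s) ^ 2)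
        = (cF (Ts s) * ∏ i ∈ Ts s, ch (s i)) ^ 2
            * Real.logb 2 (1 / (cF (Ts s) * ∏ i ∈ Ts s, ch (s i)) ^ 2) := by
    intro s
    rw [coeff_comp F h hbal (emb s), supp_emb]
    simp only [slice_emb, hTs, hcF, hch]
  rw [Finset.sum_congr rfl fun s _ => rewr s]
  rw [Finset.sum_congr rfl fun s _ => (point s).symm]
  rw [Finset.sum_comm]
  have inner : ∀ T : Finset κ,
      ∑ s : κ → Finset ι, (cF T ^ 2 * Real.logb 2 (1 / cF T ^ 2) * ∏ i, u T i (s i)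
          + cF T ^ 2 * ∑ j ∈ T, ∏ i, wE T j i (s i))
        = cF T ^ 2 * Real.logb 2 (1 / cF T ^ 2)
            + cF T ^ 2 * ((T.card : ℝ) * specEnt (fun z => b2r (h z))) := by
    intro T
    rw [Finset.sum_add_distrib]
    congr 1
    · rw [← Finset.mul_sum]
      have : ∑ s : κ → Finset ι, ∏ i, u T i (s i) = 1 := by
        rw [show (∑ s : κ → Finset ι, ∏ i, u T i (s i))
            = ∏ i, ∑ A : Finset ι, u T i A from (Fintype.prod_sum _).symm]
        refine Finset.prod_eq_one fun i _ => ?_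
        simp only [hu]
        by_cases hiT : i ∈ T
        · simp only [if_pos hiT]; exact Ph
        · simp only [if_neg hiT]; simp
      rw [this, mul_one]
    · rw [← Finset.mul_sum]
      congr 1
      rw [Finset.sum_comm]
      have hfac : ∀ j ∈ T, ∑ s : κ → Finset ι, ∏ i, wE T j i (s i)
          = specEnt (fun z => b2r (h z)) := by
        intro j hj
        rw [show (∑ s : κ → Finset ι, ∏ i, wE T j i (s i))
            = ∏ i, ∑ A : Finset ι, wE T j i A from (Fintype.prod_sum _).symm]
        rw [Finset.prod_eq_single j]
        · simp only [hwE, hu, if_pos hj]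
          unfold specEnt
          refine Finset.sum_congr rfl fun A _ => ?_
          simp only [if_true, hch]
        · intro i _ hij
          simp only [hwE, hu, if_neg hij, mul_one]
          by_cases hiT : i ∈ T
          · simp only [if_pos hiT]; exact Ph
          · simp only [if_neg hiT]; simp
        · intro hn; exact absurd (mem_univ _) hn
      rw [Finset.sum_congr rfl hfac, Finset.sum_const, nsmul_eq_mul]
  rw [Finset.sum_congr rfl fun T _ => inner T]
  rw [Finset.sum_add_distrib]
  have e1 : ∑ T : Finset κ, cF T ^ 2 * Real.logb 2 (1 / cF T ^ 2)
      = specEnt (fun y => b2r (F y)) := by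
    simp only [hcF]; rfl
  have e2 : ∑ T : Finset κ, cF T ^ 2 * ((T.card : ℝ) * specEnt (fun z => b2r (h z)))
      = totalInf (fun y => b2r (F y)) * specEnt (fun z => b2r (h z)) := by
    simp only [hcF]
    unfold totalInf
    rw [Finset.sum_mul]
    exact Finset.sum_congr rfl fun T _ => by ring
  rw [e1, e2, add_comm]

lemma supp_empty : supp (∅ : Finset (κ × ι)) = ∅ := by
  simp [supp, slice]

lemma comp_bal (F : (κ → Bool) → Bool) (h : (ι → Bool) → Bool)
    (hbal : coeff (fun z => b2r (h z)) (∅ : Finset ι) = 0)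
    (hFbal : coeff (fun y => b2r (F y)) (∅ : Finset κ) = 0) :
    coeff (fun x : κ × ι → Bool => b2r (F fun i => h fun t => x (i, t))) ∅ = 0 := by
  rw [coeff_comp F h hbal ∅, supp_empty, hFbal, zero_mul]

end S17

/-- Iterated disjoint composition: `f₀ = g`, `f_{m+1} = F(f_m(x¹),…,f_m(x^k))`. -/
def iterComp {k l : ℕ} (F : (Fin k → Bool) → Bool) (g : (Fin l → Bool) → Bool) :
    (m : ℕ) → (Idx k l m → Bool) → Bool
  | 0 => g
  | m + 1 => fun x => F (fun i => iterComp F g m (fun t => x (i, t)))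

/-- Amplification lemma: entropy and influence of iterated disjoint composition. -/
theorem stmt17 {k l : ℕ} (F : (Fin k → Bool) → Bool) (g : (Fin l → Bool) → Bool)
    (hFbal : coeff (fun x => b2r (F x)) (∅ : Finset (Fin k)) = 0)
    (hgbal : coeff (fun x => b2r (g x)) (∅ : Finset (Fin l)) = 0)
    (hInf : totalInf (fun x => b2r (F x)) ≠ 1) (m : ℕ) :
    specEnt (fun x : Idx k l m → Bool => b2r (iterComp F g m x))
        = specEnt (fun x => b2r (g x)) * (totalInf (fun x => b2r (F x))) ^ m
          + specEnt (fun x => b2r (F x)) *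
              ((totalInf (fun x => b2r (F x)) ^ m - 1)
                / (totalInf (fun x => b2r (F x)) - 1)) ∧
    totalInf (fun x : Idx k l m → Bool => b2r (iterComp F g m x))
        = totalInf (fun x => b2r (g x)) * (totalInf (fun x => b2r (F x))) ^ m := by
  have key : ∀ m : ℕ,
      coeff (fun x : Idx k l m → Bool => b2r (iterComp F g m x)) ∅ = 0 ∧
      specEnt (fun x : Idx k l m → Bool => b2r (iterComp F g m x))
          = specEnt (fun x => b2r (g x)) * (totalInf (fun x => b2r (F x))) ^ m
            + specEnt (fun x => b2r (F x)) *
                ((totalInf (fun x => b2r (F x)) ^ m - 1)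
                  / (totalInf (fun x => b2r (F x)) - 1)) ∧
      totalInf (fun x : Idx k l m → Bool => b2r (iterComp F g m x))
          = totalInf (fun x => b2r (g x)) * (totalInf (fun x => b2r (F x))) ^ m := by
    intro m
    induction m with
    | zero =>
      refine ⟨hgbal, ?_, ?_⟩
      · show specEnt (fun x : Fin l → Bool => b2r (g x)) = _
        simp
      · show totalInf (fun x : Fin l → Bool => b2r (g x)) = _
        simp
    | succ m ih =>
      obtain ⟨hb, hH, hI⟩ := ih
      have hIne : totalInf (fun x => b2r (F x)) - 1 ≠ 0 := sub_ne_zero.mpr hInf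
      refine ⟨?_, ?_, ?_⟩
      · exact S17.comp_bal F (iterComp F g m) hb hFbal
      · have hc := S17.comp_specEnt F (iterComp F g m) hb
        rw [show specEnt (fun x : Idx k l (m+1) → Bool => b2r (iterComp F g (m+1) x))
            = specEnt (fun x : Fin k × Idx k l m → Bool =>
                b2r (F fun i => iterComp F g m fun t => x (i, t))) from rfl, hc, hH]
        field_simp
        ring
      · have hc := S17.comp_totalInf F (iterComp F g m) hb
        rw [show totalInf (fun x : Idx k l (m+1) → Bool => b2r (iterComp F g (m+1) x))
            = totalInf (fun x : Fin k × Idx k l m → Bool =>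
                b2r (F fun i => iterComp F g m fun t => x (i, t))) from rfl, hc, hI]
        ring
  exact ⟨(key m).2.1, (key m).2.2⟩
end
end
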